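/- arXiv:2410.09897 — 4 statements merged into one kernel-verified Lean document; each statement's English description precedes it below -/
import Mathlib

section
/- Let (W,S) be a Coxeter system with S finite and let (R_{u,v})_{u,v∈W} ⊆ ℤ[q] be the family satisfying the defining conditions of the R-polynomials of W. Then there exists a unique family of polynomials (R̃_{u,v})_{u,v∈W} ⊆ ℤ[t] with nonnegative coefficients such that for all u,v ∈ W with u ≤ v, the identity R_{u,v}(t²) = t^{ℓ(u,v)} · R̃_{u,v}(t − t⁻¹) holds in the ring of Laurent polynomials ℤ[t,t⁻¹], and R̃_{u,v} = 0 whenever u ≰ v. -/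
open Polynomial

namespace CoxeterOpenProblems

variable {B : Type*} {W : Type*} [Group W] {M : CoxeterMatrix B}

/-- An edge `u → v` of the Bruhat graph: `v = u t` for a reflection `t`, and `ℓ(u) < ℓ(v)`. -/
def BruhatEdge (cs : CoxeterSystem M W) (u v : W) : Prop :=
  (∃ t : W, cs.IsReflection t ∧ v = u * t) ∧ cs.length u < cs.length v

/-- The Bruhat order: the reflexive-transitive closure of the Bruhat graph edge relation. -/
def BruhatLE (cs : CoxeterSystem M W) : W → W → Prop :=
  Relation.ReflTransGen (BruhatEdge cs)

/-- Strict Bruhat order. -/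
def BruhatLT (cs : CoxeterSystem M W) (u v : W) : Prop :=
  BruhatLE cs u v ∧ u ≠ v

/-- `i` indexes a right descent of `v`. -/
def IsRightDescent (cs : CoxeterSystem M W) (v : W) (i : B) : Prop :=
  cs.length (v * cs.simple i) < cs.length v

/-- The (left) quotient `W^J = { w : D_L(w) ⊆ S \ J }`. -/
def WQuot (cs : CoxeterSystem M W) (J : Set B) : Set W :=
  {w | ∀ i ∈ J, ¬ cs.length (cs.simple i * w) < cs.length w}

/-- The conditions defining the parabolic `R`-polynomials of type `x` of the quotient `W^J`. -/
def ParabolicRCond (cs : CoxeterSystem M W) (J : Set B) (x : Polynomial ℤ)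
    (R : W → W → Polynomial ℤ) : Prop :=
  (∀ u v, u ∈ WQuot cs J → v ∈ WQuot cs J → ¬ BruhatLE cs u v → R u v = 0) ∧
  (∀ u, u ∈ WQuot cs J → R u u = 1) ∧
  (∀ u v, u ∈ WQuot cs J → v ∈ WQuot cs J → BruhatLT cs u v →
    ∀ i : B, IsRightDescent cs v i →
      (BruhatLT cs (u * cs.simple i) u →
        R u v = R (u * cs.simple i) (v * cs.simple i)) ∧
      (BruhatLT cs u (u * cs.simple i) → u * cs.simple i ∈ WQuot cs J →
        R u v = (X - 1) * R u (v * cs.simple i)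
          + X * R (u * cs.simple i) (v * cs.simple i)) ∧
      (BruhatLT cs u (u * cs.simple i) → u * cs.simple i ∉ WQuot cs J →
        R u v = (X - 1 - x) * R u (v * cs.simple i)))

/-- The conditions defining the parabolic Kazhdan-Lusztig polynomials of the quotient `W^J`,
with respect to a family `R` of parabolic `R`-polynomials.  Condition (iv) is stated as an
identity of polynomials via the reversal `reflect ℓ(u,v) P = q^{ℓ(u,v)} P(1/q)`. -/
def ParabolicKLCond (cs : CoxeterSystem M W) (J : Set B)
    (R P : W → W → Polynomial ℤ) : Prop :=
  (∀ u v, u ∈ WQuot cs J → v ∈ WQuot cs J → ¬ BruhatLE cs u v → P u v = 0) ∧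
  (∀ u, u ∈ WQuot cs J → P u u = 1) ∧
  (∀ u v, u ∈ WQuot cs J → v ∈ WQuot cs J → BruhatLT cs u v →
    P u v ≠ 0 → 2 * (P u v).natDegree < cs.length v - cs.length u) ∧
  (∀ u v, u ∈ WQuot cs J → v ∈ WQuot cs J → BruhatLE cs u v →
    Polynomial.reflect (cs.length v - cs.length u) (P u v) =
      ∑ᶠ a ∈ {a | a ∈ WQuot cs J ∧ BruhatLE cs u a ∧ BruhatLE cs a v}, R u a * P a v)

open LaurentPolynomial in
private noncomputable def sig : LaurentPolynomial ℤ := T 1 - T (-1)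

private lemma sig_def : (LaurentPolynomial.T 1 - LaurentPolynomial.T (-1) : LaurentPolynomial ℤ) = sig := rfl

open LaurentPolynomial in
private lemma mul_T_apply (f : LaurentPolynomial ℤ) (n j : ℤ) :
    (f * (T n : LaurentPolynomial ℤ)).coeff j = f.coeff (j - n) := by
  have := AddMonoidAlgebra.coeff_mul_single_apply f (1 : ℤ) n j
  rw [mul_one, ← sub_eq_add_neg] at this; exact this

open LaurentPolynomial in
private lemma sig_pow_apply (k : ℕ) :
    ((sig) ^ k).coeff (k : ℤ) = 1 ∧ ∀ j : ℤ, (k : ℤ) < j → ((sig) ^ k).coeff j = 0 := by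
  induction k with
  | zero =>
    refine ⟨by rw [pow_zero, Nat.cast_zero, ← T_zero, T_apply]; simp, ?_⟩
    intro j hj
    rw [pow_zero, ← T_zero, T_apply, if_neg (by omega)]
  | succ k ih =>
    have hmul : ∀ j : ℤ, ((sig) ^ (k + 1)).coeff j = ((sig) ^ k).coeff (j - 1) - ((sig) ^ k).coeff (j + 1) := by
      intro j
      rw [pow_succ, sig, mul_sub, AddMonoidAlgebra.coeff_sub, Finsupp.sub_apply, mul_T_apply, mul_T_apply]
      ring_nf
    refine ⟨?_, ?_⟩
    · rw [hmul]
      push_cast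
      rw [show ((k : ℤ) + 1 - 1) = k by ring, ih.1, ih.2 _ (by omega)]
      ring
    · intro j hj
      rw [hmul, ih.2 _ (by omega), ih.2 _ (by omega)]
      ring

open LaurentPolynomial in
private lemma aeval_sig_apply (p : Polynomial ℤ) :
    (Polynomial.aeval sig p : LaurentPolynomial ℤ).coeff ((p.natDegree : ℤ)) = p.leadingCoeff := by
  rw [Polynomial.aeval_eq_sum_range, AddMonoidAlgebra.coeff_sum, Finsupp.finset_sum_apply, Finset.sum_eq_single p.natDegree]
  · rw [AddMonoidAlgebra.coeff_smul_apply, (sig_pow_apply p.natDegree).1, smul_eq_mul, mul_one]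
    rfl
  · intro i hi hne
    rw [Finset.mem_range] at hi
    rw [AddMonoidAlgebra.coeff_smul_apply, (sig_pow_apply i).2 _ (by exact_mod_cast (by omega : i < p.natDegree)),
      smul_eq_mul, mul_zero]
  · intro h
    exact absurd (Finset.self_mem_range_succ _) h

private lemma aeval_sig_injective {p : Polynomial ℤ} (h : Polynomial.aeval sig p = 0) : p = 0 := by
  by_contra hp
  have := aeval_sig_apply p
  rw [h] at this
  exact (Polynomial.leadingCoeff_ne_zero.mpr hp) (by simpa using this.symm)

open LaurentPolynomial

/-- There is a unique family `(R̃_{u,v})` of polynomials with nonnegative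
coefficients such that `R_{u,v}(t²) = t^{ℓ(u,v)} · R̃_{u,v}(t - t⁻¹)` in `ℤ[t,t⁻¹]` whenever
`u ≤ v`, and `R̃_{u,v} = 0` whenever `u ≰ v`.  Here `R` is the family of ordinary
`R`-polynomials of `W` (the parabolic ones with `J = ∅`). -/
theorem statement5 [Finite B] (cs : CoxeterSystem M W)
    (R : W → W → Polynomial ℤ)
    (hR : ParabolicRCond cs (∅ : Set B) (-1) R) :
    ∃! Rt : W → W → Polynomial ℤ,
      (∀ u v : W, ∀ k : ℕ, 0 ≤ (Rt u v).coeff k) ∧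
      (∀ u v : W, BruhatLE cs u v →
        Polynomial.aeval (LaurentPolynomial.T 2 : LaurentPolynomial ℤ) (R u v) =
          LaurentPolynomial.T ((cs.length v : ℤ) - (cs.length u : ℤ)) *
            Polynomial.aeval
              ((LaurentPolynomial.T 1 - LaurentPolynomial.T (-1)) : LaurentPolynomial ℤ)
              (Rt u v)) ∧
      (∀ u v : W, ¬ BruhatLE cs u v → Rt u v = 0) := by
  classical
  obtain ⟨h0, h1, hrec⟩ := hR
  have hmem : ∀ w : W, w ∈ WQuot cs (∅ : Set B) := fun w i hi => absurd hi (Set.notMem_empty i)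
  have hlen : ∀ {u v : W}, BruhatLE cs u v → cs.length u ≤ cs.length v := by
    intro u v h
    induction h with
    | refl => exact le_refl _
    | tail hbc e ih => exact ih.trans e.2.le
  have hltlen : ∀ {u v : W}, BruhatLE cs u v → u ≠ v → cs.length u < cs.length v := by
    intro u v h
    induction h with
    | refl => exact fun h => absurd rfl h
    | tail hbc e ih => exact fun _ => lt_of_le_of_lt (hlen hbc) e.2
  have heq : ∀ (P1 P2 : LaurentPolynomial ℤ) (a1 a2 a : ℤ),
      (T 1 : LaurentPolynomial ℤ) * T a1 = T a → (T 2 : LaurentPolynomial ℤ) * T a2 = T a →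
      (T 1 * sig) * (T a1 * P1) + T 2 * (T a2 * P2) = T a * (sig * P1 + P2) := by
    intro P1 P2 a1 a2 a e1 e2
    calc (T 1 * sig) * (T a1 * P1) + T 2 * (T a2 * P2)
        = ((T 1 : LaurentPolynomial ℤ) * T a1) * (sig * P1) + ((T 2 : LaurentPolynomial ℤ) * T a2) * P2 := by ring
      _ = T a * (sig * P1) + T a * P2 := by rw [e1, e2]
      _ = T a * (sig * P1 + P2) := by ring
  have key : ∀ n : ℕ, ∀ v u : W, cs.length v = n → BruhatLE cs u v →
      ∃ p : Polynomial ℤ, (∀ k, 0 ≤ p.coeff k) ∧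
        Polynomial.aeval (T 2 : LaurentPolynomial ℤ) (R u v) =
          T ((cs.length v : ℤ) - (cs.length u : ℤ)) * Polynomial.aeval sig p := by
    intro n
    induction n using Nat.strong_induction_on with
    | _ n ih =>
      intro v u hv hle
      by_cases huv : u = v
      · subst huv
        refine ⟨1, fun k => by rw [Polynomial.coeff_one]; split <;> norm_num, ?_⟩
        rw [h1 u (hmem u), map_one, sub_self, T_zero, map_one, mul_one]
      · have hlt : cs.length u < cs.length v := hltlen hle huv
        have hv1 : v ≠ 1 := by
          intro h
          rw [h, cs.length_one] at hlt
          omega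
        obtain ⟨i, hdesc⟩ := cs.exists_rightDescent_of_ne_one hv1
        have hdesc' : IsRightDescent cs v i := hdesc
        have hvslen : cs.length (v * cs.simple i) + 1 = cs.length v := cs.isRightDescent_iff.mp hdesc
        have hrecuv := hrec u v (hmem u) (hmem v) ⟨hle, huv⟩ i hdesc'
        have husls := cs.length_mul_simple_ne u i
        have husu : (u * cs.simple i) * cs.simple i = u := by
          rw [mul_assoc, cs.simple_mul_simple_self, mul_one]
        rcases lt_or_gt_of_ne husls with hA | hB
        · -- Case A : u * s < u
          have hne2 : u * cs.simple i ≠ u := fun h => husls (by rw [h])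
          have hblt : BruhatLT cs (u * cs.simple i) u :=
            ⟨Relation.ReflTransGen.single
              ⟨⟨cs.simple i, cs.isReflection_simple i, husu.symm⟩, hA⟩, hne2⟩
          have hRuv : R u v = R (u * cs.simple i) (v * cs.simple i) := hrecuv.1 hblt
          have huslen : cs.length (u * cs.simple i) + 1 = cs.length u := cs.isRightDescent_iff.mp hA
          by_cases hle' : BruhatLE cs (u * cs.simple i) (v * cs.simple i)
          · obtain ⟨p, hp, hid⟩ := ih (cs.length (v * cs.simple i)) (by omega) _ _ rfl hle'
            refine ⟨p, hp, ?_⟩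
            rw [hRuv, hid]
            congr 2
            omega
          · refine ⟨0, by simp, ?_⟩
            rw [hRuv, h0 _ _ (hmem _) (hmem _) hle', map_zero, map_zero, mul_zero]
        · -- Case B : u < u * s
          have hne2 : u ≠ u * cs.simple i := fun h => husls (by rw [← h])
          have hblt : BruhatLT cs u (u * cs.simple i) :=
            ⟨Relation.ReflTransGen.single
              ⟨⟨cs.simple i, cs.isReflection_simple i, rfl⟩, hB⟩, hne2⟩
          have hRuv := hrecuv.2.1 hblt (hmem _)
          have huslen : cs.length (u * cs.simple i) = cs.length u + 1 :=
            cs.not_isRightDescent_iff.mp (fun h => absurd hB (lt_asymm h))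
          obtain ⟨p1, hp1, hid1⟩ : ∃ p1 : Polynomial ℤ, (∀ k, 0 ≤ p1.coeff k) ∧
              Polynomial.aeval (T 2 : LaurentPolynomial ℤ) (R u (v * cs.simple i)) =
                T ((cs.length (v * cs.simple i) : ℤ) - (cs.length u : ℤ)) *
                  Polynomial.aeval sig p1 := by
            by_cases h1' : BruhatLE cs u (v * cs.simple i)
            · exact ih (cs.length (v * cs.simple i)) (by omega) _ _ rfl h1'
            · exact ⟨0, by simp, by
                rw [h0 _ _ (hmem _) (hmem _) h1', map_zero, map_zero, mul_zero]⟩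
          obtain ⟨p2, hp2, hid2⟩ : ∃ p2 : Polynomial ℤ, (∀ k, 0 ≤ p2.coeff k) ∧
              Polynomial.aeval (T 2 : LaurentPolynomial ℤ) (R (u * cs.simple i) (v * cs.simple i)) =
                T ((cs.length (v * cs.simple i) : ℤ) - (cs.length (u * cs.simple i) : ℤ)) *
                  Polynomial.aeval sig p2 := by
            by_cases h2' : BruhatLE cs (u * cs.simple i) (v * cs.simple i)
            · exact ih (cs.length (v * cs.simple i)) (by omega) _ _ rfl h2'
            · exact ⟨0, by simp, by
                rw [h0 _ _ (hmem _) (hmem _) h2', map_zero, map_zero, mul_zero]⟩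
          refine ⟨Polynomial.X * p1 + p2, ?_, ?_⟩
          · intro k
            rw [Polynomial.coeff_add]
            cases k with
            | zero =>
              rw [Polynomial.mul_coeff_zero, Polynomial.coeff_X_zero, zero_mul, zero_add]
              exact hp2 0
            | succ k =>
              rw [Polynomial.coeff_X_mul]
              exact add_nonneg (hp1 k) (hp2 (k + 1))
          · have hT21 : (T 2 - 1 : LaurentPolynomial ℤ) = T 1 * sig := by
              rw [sig, mul_sub, ← T_add, ← T_add]
              norm_num
            have e1 : (T 1 : LaurentPolynomial ℤ) *
                T ((cs.length (v * cs.simple i) : ℤ) - (cs.length u : ℤ))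
                = T ((cs.length v : ℤ) - (cs.length u : ℤ)) := by
              rw [← T_add]
              congr 1
              omega
            have e2 : (T 2 : LaurentPolynomial ℤ) *
                T ((cs.length (v * cs.simple i) : ℤ) - (cs.length (u * cs.simple i) : ℤ))
                = T ((cs.length v : ℤ) - (cs.length u : ℤ)) := by
              rw [← T_add]
              congr 1
              omega
            rw [hRuv]
            simp only [map_add, map_mul, map_sub, map_one, Polynomial.aeval_X]
            rw [hid1, hid2, hT21]
            exact heq _ _ _ _ _ e1 e2
  have key' : ∀ u v : W, BruhatLE cs u v →
      ∃ p : Polynomial ℤ, (∀ k, 0 ≤ p.coeff k) ∧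
        Polynomial.aeval (T 2 : LaurentPolynomial ℤ) (R u v) =
          T ((cs.length v : ℤ) - (cs.length u : ℤ)) * Polynomial.aeval sig p :=
    fun u v h => key (cs.length v) v u rfl h
  refine ⟨fun u v => if h : BruhatLE cs u v then (key' u v h).choose else 0, ⟨?_, ?_, ?_⟩, ?_⟩
  · intro u v k
    dsimp only
    split_ifs with h
    · exact ((key' u v h).choose_spec).1 k
    · simp
  · intro u v h
    rw [sig_def]
    simp only [dif_pos h]
    exact ((key' u v h).choose_spec).2
  · intro u v h
    simp only [dif_neg h]
  · intro y ⟨hy1, hy2, hy3⟩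
    funext u v
    by_cases h : BruhatLE cs u v
    · have e1 := hy2 u v h
      rw [sig_def] at e1
      have e2 := ((key' u v h).choose_spec).2
      have e3 := (isUnit_T ((cs.length v : ℤ) - (cs.length u : ℤ))).mul_left_cancel (e1.symm.trans e2)
      have e4 : Polynomial.aeval sig (y u v - (key' u v h).choose) = 0 := by
        rw [map_sub, ← e3, sub_self]
      have h5 := aeval_sig_injective e4
      have h6 : (if h : BruhatLE cs u v then (key' u v h).choose else 0) = (key' u v h).choose :=
        dif_pos h
      exact (sub_eq_zero.mp h5).trans h6.symm
    · rw [hy3 u v h, dif_neg h]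

end CoxeterOpenProblems
end

section
/- Let n ≥ 1 and let w₀ ∈ S_n be the permutation w₀(i) = n+1−i. Then for every σ ∈ S_n, L(σ ∘ w₀) = L(w₀) − L(σ), where L(w₀) = ⌊n²/4⌋. -/
/-!
An odd pair `i < j` (entries of different parity) is an inversion of exactly one of `σ` and
`σ ∘ w₀` once the pairs of the latter are relabelled by `(i, j) ↦ (w₀ j, w₀ i)`, a relabelling
that preserves odd pairs. Hence `L(σ) + L(σ ∘ w₀)` is the number of odd pairs, which is
`L(w₀)` (take `σ = 1`). The odd pairs are the edges of the Turán graph `T(n, 2)`, which has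
`⌊n² / 4⌋` edges.
-/

namespace OddLength

/-- The odd length of a permutation `σ ∈ S_n`: the number of inversions `(i,j)`, `i < j`,
`σ(i) > σ(j)`, whose entries have different parities. -/
def oddLength {n : ℕ} (σ : Equiv.Perm (Fin n)) : ℕ :=
  (Finset.univ.filter fun p : Fin n × Fin n =>
    p.1 < p.2 ∧ σ p.2 < σ p.1 ∧ (p.1 : ℕ) % 2 ≠ (p.2 : ℕ) % 2).card

open Finset SimpleGraph

def oddPairs (n : ℕ) : Finset (Fin n × Fin n) :=
  {p | p.1 < p.2 ∧ (p.1 : ℕ) % 2 ≠ (p.2 : ℕ) % 2}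

lemma oddLength_eq_card_filter_oddPairs {n : ℕ} (σ : Equiv.Perm (Fin n)) :
    oddLength σ = #{p ∈ oddPairs n | σ p.2 < σ p.1} := by
  rw [oddPairs, filter_filter, oddLength]
  congr 1
  ext p
  simp only [mem_filter, mem_univ, true_and]
  tauto

lemma oddLength_add_card_filter_lt {n : ℕ} (σ : Equiv.Perm (Fin n)) :
    oddLength σ + #{p ∈ oddPairs n | σ p.1 < σ p.2} = #(oddPairs n) := by
  rw [oddLength_eq_card_filter_oddPairs,
    ← card_filter_add_card_filter_not (s := oddPairs n) (fun p => σ p.2 < σ p.1)]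
  congr 2
  refine filter_congr fun p hp => ?_
  have hne : σ p.1 ≠ σ p.2 := σ.injective.ne (mem_filter.1 hp).2.1.ne
  exact ⟨fun h => h.asymm, fun h => lt_of_le_of_ne (not_lt.1 h) hne⟩

lemma rev_swap_mem_oddPairs {n : ℕ} {p : Fin n × Fin n} :
    (p.2.rev, p.1.rev) ∈ oddPairs n ↔ p ∈ oddPairs n := by
  simp only [oddPairs, mem_filter, mem_univ, true_and, Fin.rev_lt_rev, Fin.val_rev]
  have := p.1.isLt
  have := p.2.isLt
  omega

lemma oddLength_mul_revPerm {n : ℕ} (σ : Equiv.Perm (Fin n)) :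
    oddLength (σ * Fin.revPerm) = #{p ∈ oddPairs n | σ p.1 < σ p.2} := by
  rw [oddLength_eq_card_filter_oddPairs]
  refine card_nbij' (fun p => (p.2.rev, p.1.rev)) (fun p => (p.2.rev, p.1.rev)) ?_ ?_ ?_ ?_ <;>
    intro p <;> simp [rev_swap_mem_oddPairs]

lemma oddLength_revPerm (n : ℕ) :
    oddLength (Fin.revPerm : Equiv.Perm (Fin n)) = #(oddPairs n) := by
  have h := oddLength_mul_revPerm (1 : Equiv.Perm (Fin n))
  rwa [one_mul, filter_true_of_mem fun p hp => (mem_filter.1 hp).2.1] at h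

lemma card_oddPairs_eq_card_edgeFinset_turanGraph (n : ℕ) :
    #(oddPairs n) = #(turanGraph n 2).edgeFinset := by
  refine card_nbij' (fun p => s(p.1, p.2)) (fun e => (e.inf, e.sup)) ?_ ?_ ?_ ?_
  · intro p hp
    simp_all [oddPairs, turanGraph_adj]
  · intro e he
    induction e with | _ a b
    rw [mem_coe, mem_edgeFinset, mem_edgeSet, turanGraph_adj] at he
    simp only [Sym2.inf_mk, Sym2.sup_mk, oddPairs, coe_filter, Set.mem_ofPred_eq, mem_univ,
      true_and, Fin.lt_def, Fin.coe_min, Fin.coe_max]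
    omega
  · intro p hp
    exact Prod.ext (min_eq_left (mem_filter.1 hp).2.1.le) (max_eq_right (mem_filter.1 hp).2.1.le)
  · intro e _
    exact Sym2.sortEquiv.symm_apply_apply e

lemma _root_.SimpleGraph.card_edgeFinset_turanGraph_two (n : ℕ) :
    #(turanGraph n 2).edgeFinset = n ^ 2 / 4 := by
  rw [card_edgeFinset_turanGraph, Nat.choose_eq_zero_of_lt (Nat.mod_lt n two_pos), add_zero]
  obtain ⟨m, rfl | rfl⟩ := Nat.even_or_odd' n
  · rw [Nat.mul_mod_right, show (2 * m) ^ 2 = 4 * m ^ 2 by ring]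
    omega
  · rw [Nat.mul_add_mod, Nat.one_mod, one_pow, show (2 * m + 1) ^ 2 = 4 * (m ^ 2 + m) + 1 by ring]
    omega

theorem statement9_general (n : ℕ) :
    (∀ σ : Equiv.Perm (Fin n),
      (oddLength (σ * Fin.revPerm) : ℤ) =
        (oddLength (Fin.revPerm : Equiv.Perm (Fin n)) : ℤ) - (oddLength σ : ℤ)) ∧
    oddLength (Fin.revPerm : Equiv.Perm (Fin n)) = n ^ 2 / 4 := by
  refine ⟨fun σ => ?_, ?_⟩
  · have h := oddLength_add_card_filter_lt σ
    rw [oddLength_mul_revPerm, oddLength_revPerm]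
    omega
  · rw [oddLength_revPerm, card_oddPairs_eq_card_edgeFinset_turanGraph,
      card_edgeFinset_turanGraph_two]

/-- For the longest element `w₀ : i ↦ n+1-i` of `S_n` (here `Fin.revPerm`)
one has `L(σ ∘ w₀) = L(w₀) - L(σ)` for every `σ`, and `L(w₀) = ⌊n²/4⌋`. -/
theorem statement9 (n : ℕ) (hn : 1 ≤ n) :
    (∀ σ : Equiv.Perm (Fin n),
      (oddLength (σ * Fin.revPerm) : ℤ) =
        (oddLength (Fin.revPerm : Equiv.Perm (Fin n)) : ℤ) - (oddLength σ : ℤ)) ∧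
    oddLength (Fin.revPerm : Equiv.Perm (Fin n)) = n ^ 2 / 4 :=
  statement9_general n

end OddLength
end

section
/- Let n ∈ ℕ and let P(t) = Σ_{j=0}^{n} a_j t^j be a real polynomial with nonnegative coefficients that is symmetric with respect to n (a_j = a_{n−j} for all 0 ≤ j ≤ n) and has only real roots (P splits over ℝ). Then P is γ-nonnegative: the unique real numbers γ_0, …, γ_{⌊n/2⌋} with P(t) = Σ_{k=0}^{⌊n/2⌋} γ_k t^k (1+t)^{n−2k} satisfy γ_k ≥ 0 for all 0 ≤ k ≤ ⌊n/2⌋. -/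
open Polynomial Finset

private lemma mulCoeffNonneg {p q : ℝ[X]} (hp : ∀ k, 0 ≤ p.coeff k)
    (hq : ∀ k, 0 ≤ q.coeff k) (k : ℕ) : 0 ≤ (p * q).coeff k := by
  rw [coeff_mul]
  exact Finset.sum_nonneg fun x _ => mul_nonneg (hp _) (hq _)

private lemma prodNegRoots (s : Multiset ℝ) (hs : ∀ θ ∈ s, θ < 0) (k : ℕ) :
    0 ≤ ((s.map fun a => X - C a).prod).coeff k := by
  induction s using Multiset.induction_on generalizing k with
  | empty =>
    simp only [Multiset.map_zero, Multiset.prod_zero, coeff_one]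
    split <;> norm_num
  | cons a s ih =>
    rw [Multiset.map_cons, Multiset.prod_cons]
    refine mulCoeffNonneg ?_ (fun m => ih (fun θ hθ => hs θ (Multiset.mem_cons_of_mem hθ)) m) k
    intro m
    have ha : a < 0 := hs a (Multiset.mem_cons_self a s)
    match m with
    | 0 => simp only [coeff_sub, coeff_X_zero, coeff_C_zero, zero_sub]; linarith
    | 1 => simp
    | (m+2) => simp [coeff_sub, coeff_X, coeff_C]

private lemma nonnegOfSplits {Q : ℝ[X]} (hs : Q.Splits)
    (hl : 0 ≤ Q.leadingCoeff) (hr : ∀ θ ∈ Q.roots, θ < 0) (k : ℕ) : 0 ≤ Q.coeff k := by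
  have h := hs.eq_prod_roots
  rw [h]
  refine mulCoeffNonneg ?_ (prodNegRoots _ hr) k
  intro m
  rw [coeff_C]
  split <;> simp [hl]

private lemma evalPos {P : ℝ[X]} (hnn : ∀ k, 0 ≤ P.coeff k) (h0 : 0 < P.coeff 0)
    {x : ℝ} (hx : 0 ≤ x) : 0 < P.eval x := by
  rw [eval_eq_sum_range]
  apply Finset.sum_pos'
  · intro i _
    exact mul_nonneg (hnn i) (pow_nonneg hx i)
  · exact ⟨0, Finset.mem_range.mpr (Nat.succ_pos _), by simpa using h0⟩

private lemma reflectIff {P : ℝ[X]} {n : ℕ} (hdeg : P.natDegree ≤ n) :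
    reflect n P = P ↔ ∀ j ≤ n, P.coeff j = P.coeff (n - j) := by
  clear hdeg
  constructor
  · intro h j hj
    have h2 := congrArg (fun p => coeff p j) h
    simp only [coeff_reflect, revAt_le hj] at h2
    exact h2.symm
  · intro h
    ext i
    rw [coeff_reflect]
    rcases le_or_gt i n with hi | hi
    · rw [revAt_le hi]; exact (h i hi).symm
    · rw [revAt_eq_self_of_lt hi]

private lemma reflectLinear (a : ℝ) : reflect 1 (X - C a) = 1 - C a * X := by
  rw [reflect_sub, reflect_C]
  have h1 : (X : ℝ[X]) = C 1 * X ^ 1 := by simp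
  rw [h1, reflect_C_mul_X_pow]
  have h2 : revAt 1 1 = 0 := by rw [revAt_le le_rfl]
  rw [h2]
  simp [pow_one]

set_option maxHeartbeats 1000000 in
private lemma keyLemma : ∀ n : ℕ, ∀ P : ℝ[X], P.natDegree ≤ n → (∀ k, 0 ≤ P.coeff k) →
    reflect n P = P → P.Splits →
    ∃ γ : ℕ → ℝ, (∀ k, 0 ≤ γ k) ∧
      P = ∑ k ∈ range (n / 2 + 1), C (γ k) * X ^ k * (1 + X) ^ (n - 2 * k) := by
  intro n
  induction n using Nat.strong_induction_on with
  | _ n IH =>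
    intro P hdeg hnn hsym hreal
    by_cases hP0 : P = 0
    · exact ⟨0, fun k => le_refl 0, by simp [hP0]⟩
    have hsym' : ∀ j ≤ n, P.coeff j = P.coeff (n - j) := (reflectIff hdeg).mp hsym
    have hlc : P.coeff P.natDegree ≠ 0 := by
      simpa [coeff_natDegree] using leadingCoeff_ne_zero.mpr hP0
    by_cases h0 : P.coeff 0 = 0
    · -- Case A : X divides P
      have hcn : P.coeff n = 0 := by
        have h2 := hsym' n le_rfl
        simpa [Nat.sub_self, h0] using h2
      have hn2 : 2 ≤ n := by
        by_contra h
        interval_cases n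
        · exact hlc (by rwa [Nat.le_zero.mp hdeg])
        · have hd : P.natDegree = 0 ∨ P.natDegree = 1 := by omega
          rcases hd with hd | hd
          · exact hlc (by rw [hd]; exact h0)
          · exact hlc (by rw [hd]; exact hcn)
      obtain ⟨Q, hQ⟩ := X_dvd_iff.mpr h0
      have hQ0 : Q ≠ 0 := fun h => hP0 (by rw [hQ, h, mul_zero])
      have hPdeg : P.natDegree ≤ n - 1 := by
        rcases lt_or_eq_of_le hdeg with h | h
        · omega
        · rw [h] at hlc; exact absurd hcn hlc
      have hdegQ : Q.natDegree ≤ n - 2 := by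
        have hmul := natDegree_mul (X_ne_zero (R := ℝ)) hQ0
        rw [hQ] at hPdeg
        rw [hmul, natDegree_X] at hPdeg
        omega
      have hcoeffQ : ∀ k, Q.coeff k = P.coeff (k + 1) := fun k => by rw [hQ, coeff_X_mul]
      have hnnQ : ∀ k, 0 ≤ Q.coeff k := fun k => (hcoeffQ k) ▸ hnn (k + 1)
      have hsymQ : reflect (n - 2) Q = Q := by
        rw [reflectIff hdegQ]
        intro j hj
        rw [hcoeffQ, hcoeffQ, hsym' (j + 1) (by omega)]
        congr 1
        omega
      have hrealQ : Q.Splits :=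
        hreal.of_dvd hP0 ⟨X, by rw [hQ]; ring⟩
      obtain ⟨γ', hγpos, hγsum⟩ := IH (n - 2) (by omega) Q hdegQ hnnQ hsymQ hrealQ
      refine ⟨fun k => if k = 0 then 0 else γ' (k - 1), fun k => by
        simp only
        split
        · exact le_refl 0
        · exact hγpos _, ?_⟩
      have hm : n / 2 + 1 = ((n - 2) / 2 + 1) + 1 := by omega
      rw [hm, Finset.sum_range_succ']
      simp only [Nat.succ_ne_zero, if_false, Nat.add_sub_cancel, eq_self_iff_true, if_true,
        map_zero, zero_mul, add_zero]
      rw [hQ, hγsum, Finset.mul_sum]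
      apply Finset.sum_congr rfl
      intro i hi
      have hexp : n - 2 * (i + 1) = (n - 2) - 2 * i := by omega
      rw [hexp]
      ring
    · -- Case B : P.coeff 0 > 0
      have h0' : 0 < P.coeff 0 := (hnn 0).lt_of_ne (Ne.symm h0)
      have hcn : P.coeff n ≠ 0 := by
        have h2 := hsym' n le_rfl
        rw [Nat.sub_self] at h2
        rw [h2]; exact h0
      have hnd : P.natDegree = n := le_antisymm hdeg (le_natDegree_of_ne_zero hcn)
      rcases Nat.eq_zero_or_pos n with hn0 | hn1
      · subst hn0
        refine ⟨fun _ => P.coeff 0, fun _ => hnn 0, ?_⟩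
        rw [Finset.sum_range_one]
        simpa using eq_C_of_natDegree_le_zero hdeg
      · obtain ⟨θ, hθ⟩ := hreal.exists_eval_eq_zero
          (by rw [degree_eq_natDegree hP0, hnd]; exact_mod_cast (by omega : n ≠ 0))
        have hθ' : P.eval θ = 0 := hθ
        have hθneg : θ < 0 := by
          by_contra h
          exact (evalPos hnn h0' (le_of_not_gt h)).ne' hθ'
        have hθ0 : θ ≠ 0 := ne_of_lt hθneg
        have hinv : P.eval θ⁻¹ = 0 := by
          letI := invertibleOfNonzero hθ0
          have h2 := (eval₂_reflect_eq_zero_iff (RingHom.id ℝ) θ n P hdeg).mpr hθ'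
          rwa [hsym, invOf_eq_inv] at h2
        have hPlc : 0 ≤ P.leadingCoeff := hnn _
        by_cases hm1 : θ = -1
        · -- linear factor X + 1
          obtain ⟨Q, hQ⟩ := dvd_iff_isRoot.mpr hθ'
          have hlin0 : (X - C θ) ≠ (0 : ℝ[X]) := X_sub_C_ne_zero θ
          have hQ0 : Q ≠ 0 := fun h => hP0 (by rw [hQ, h, mul_zero])
          have hmulnd := natDegree_mul hlin0 hQ0
          rw [natDegree_X_sub_C] at hmulnd
          rw [hQ] at hnd
          rw [hmulnd] at hnd
          have hndQ : Q.natDegree = n - 1 := by omega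
          have hdvd : Q ∣ P := ⟨X - C θ, by rw [hQ]; ring⟩
          have hrealQ := hreal.of_dvd hP0 hdvd
          have hrootsQ : ∀ ϑ ∈ Q.roots, ϑ < 0 := by
            intro ϑ hϑ
            have hPϑ : P.eval ϑ = 0 := by
              rw [hQ, eval_mul, ((mem_roots hQ0).mp hϑ : Q.IsRoot ϑ), mul_zero]
            by_contra h
            exact (evalPos hnn h0' (le_of_not_gt h)).ne' hPϑ
          have hlcQ : 0 ≤ Q.leadingCoeff := by
            have h2 : P.leadingCoeff = (X - C θ).leadingCoeff * Q.leadingCoeff := by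
              rw [hQ, leadingCoeff_mul]
            rw [(monic_X_sub_C θ).leadingCoeff, one_mul] at h2
            rw [← h2]; exact hPlc
          have hnnQ : ∀ k, 0 ≤ Q.coeff k := nonnegOfSplits hrealQ hlcQ hrootsQ
          have hsymQ : reflect (n - 1) Q = Q := by
            have h1 := reflect_mul (X - C θ) Q (le_of_eq (natDegree_X_sub_C θ))
              (le_of_eq hndQ)
            rw [show 1 + (n - 1) = n by omega, ← hQ, hsym, reflectLinear] at h1
            have h3 : (1 : ℝ[X]) - C θ * X = X - C θ := by
              rw [hm1]; simp; ring
            rw [h3, hQ] at h1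
            exact (mul_left_cancel₀ hlin0 h1).symm
          obtain ⟨γ', hγpos, hγsum⟩ := IH (n - 1) (by omega) Q (le_of_eq hndQ) hnnQ hsymQ hrealQ
          refine ⟨fun k => if k < (n - 1) / 2 + 1 then γ' k else 0, fun k => by
            simp only
            split
            · exact hγpos _
            · exact le_refl 0, ?_⟩
          have hsub : range ((n - 1) / 2 + 1) ⊆ range (n / 2 + 1) :=
            Finset.range_subset_range.mpr (by omega)
          rw [← Finset.sum_subset hsub (fun x _ hxs => by
            simp only
            rw [if_neg (by simpa using hxs)]; simp)]
          rw [hQ, hγsum, Finset.mul_sum]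
          apply Finset.sum_congr rfl
          intro i hi
          simp only
          rw [if_pos (Finset.mem_range.mp hi)]
          have hexp : n - 2 * i = ((n - 1) - 2 * i) + 1 := by
            have := Finset.mem_range.mp hi; omega
          rw [hexp, pow_succ]
          have h4 : X - C θ = 1 + X := by rw [hm1]; simp; ring
          rw [h4]
          ring
        · -- quadratic factor
          have hCC : C θ * C θ⁻¹ = (1 : ℝ[X]) := by
            rw [← C_mul, mul_inv_cancel₀ hθ0, C_1]
          have hinvne : θ⁻¹ ≠ θ := by
            intro h
            have h2 : (θ - 1) * (θ + 1) = 0 := by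
              have h3 : θ * θ⁻¹ = 1 := mul_inv_cancel₀ hθ0
              nlinarith [h3, h]
            rcases mul_eq_zero.mp h2 with h4 | h4
            · nlinarith
            · exact hm1 (by linarith)
          have hroot1 : θ ∈ P.roots := (mem_roots hP0).mpr hθ'
          have hroot2 : θ⁻¹ ∈ P.roots := (mem_roots hP0).mpr hinv
          have hpair : ({θ, θ⁻¹} : Multiset ℝ) ≤ P.roots := by
            rw [Multiset.le_iff_count]
            intro a
            rw [Multiset.insert_eq_cons, Multiset.count_cons, Multiset.count_singleton]
            by_cases h1 : a = θ
            · subst h1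
              rw [if_neg (fun h => hinvne h.symm), if_pos rfl]
              simpa using Multiset.one_le_count_iff_mem.mpr hroot1
            · rw [if_neg h1]
              by_cases h2 : a = θ⁻¹
              · subst h2
                rw [if_pos rfl]
                simpa using Multiset.one_le_count_iff_mem.mpr hroot2
              · rw [if_neg h2]
                simp
          have hDdvd : (X - C θ) * (X - C θ⁻¹) ∣ P := by
            have h1 : (({θ, θ⁻¹} : Multiset ℝ).map fun a => X - C a).prod ∣
                (P.roots.map fun a => X - C a).prod :=
              Multiset.prod_dvd_prod_of_le (Multiset.map_le_map hpair)
            have h2 := h1.trans (prod_multiset_X_sub_C_dvd P)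
            simpa [Multiset.insert_eq_cons] using h2
          obtain ⟨Q, hQ⟩ := hDdvd
          have hmonD : ((X - C θ) * (X - C θ⁻¹)).Monic :=
            (monic_X_sub_C θ).mul (monic_X_sub_C θ⁻¹)
          have hD0 : (X - C θ) * (X - C θ⁻¹) ≠ 0 := hmonD.ne_zero
          have hQ0 : Q ≠ 0 := fun h => hP0 (by rw [hQ, h, mul_zero])
          have hndD : ((X - C θ) * (X - C θ⁻¹)).natDegree = 2 := by
            rw [natDegree_mul (X_sub_C_ne_zero θ) (X_sub_C_ne_zero θ⁻¹),
              natDegree_X_sub_C, natDegree_X_sub_C]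
          have hmulnd := natDegree_mul hD0 hQ0
          rw [hQ] at hnd
          rw [hmulnd, hndD] at hnd
          have hndQ : Q.natDegree = n - 2 := by omega
          have hn2 : 2 ≤ n := by omega
          have hdvd : Q ∣ P := ⟨(X - C θ) * (X - C θ⁻¹), by rw [hQ]; ring⟩
          have hrealQ := hreal.of_dvd hP0 hdvd
          have hrootsQ : ∀ ϑ ∈ Q.roots, ϑ < 0 := by
            intro ϑ hϑ
            have hPϑ : P.eval ϑ = 0 := by
              rw [hQ, eval_mul, ((mem_roots hQ0).mp hϑ : Q.IsRoot ϑ), mul_zero]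
            by_contra h
            exact (evalPos hnn h0' (le_of_not_gt h)).ne' hPϑ
          have hlcQ : 0 ≤ Q.leadingCoeff := by
            have h2 : P.leadingCoeff = ((X - C θ) * (X - C θ⁻¹)).leadingCoeff * Q.leadingCoeff := by
              rw [hQ, leadingCoeff_mul]
            rw [hmonD.leadingCoeff, one_mul] at h2
            rw [← h2]; exact hPlc
          have hnnQ : ∀ k, 0 ≤ Q.coeff k := nonnegOfSplits hrealQ hlcQ hrootsQ
          have hreflD : reflect 2 ((X - C θ) * (X - C θ⁻¹)) = (X - C θ) * (X - C θ⁻¹) := by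
            have h1 := reflect_mul (X - C θ) (X - C θ⁻¹) (le_of_eq (natDegree_X_sub_C θ))
              (le_of_eq (natDegree_X_sub_C θ⁻¹))
            rw [show (1 + 1 : ℕ) = 2 from rfl] at h1
            rw [h1, reflectLinear, reflectLinear]
            linear_combination (X ^ 2 - 1) * hCC
          have hsymQ : reflect (n - 2) Q = Q := by
            have h2 := reflect_mul ((X - C θ) * (X - C θ⁻¹)) Q (le_of_eq hndD)
              (le_of_eq hndQ)
            rw [show 2 + (n - 2) = n by omega, ← hQ, hsym, hreflD] at h2
            rw [hQ] at h2
            exact (mul_left_cancel₀ hD0 h2).symm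
          obtain ⟨γ', hγpos, hγsum⟩ := IH (n - 2) (by omega) Q (le_of_eq hndQ) hnnQ hsymQ hrealQ
          set b : ℝ := -(θ + θ⁻¹) with hb
          have hb2 : 2 ≤ b := by
            have h4 : -(θ + θ⁻¹) - 2 = (θ + 1) ^ 2 * (-θ⁻¹) := by
              field_simp
              ring
            have h5 : θ⁻¹ < 0 := inv_lt_zero.mpr hθneg
            have h6 : (0:ℝ) ≤ (θ + 1) ^ 2 * (-θ⁻¹) := mul_nonneg (sq_nonneg _) (by linarith)
            rw [hb]
            linarith
          set m := (n - 2) / 2 + 1 with hmdef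
          set δ : ℕ → ℝ := fun k => if k < m then γ' k else 0 with hδ
          have hδpos : ∀ k, 0 ≤ δ k := fun k => by
            simp only [hδ]; split
            · exact hγpos _
            · exact le_refl 0
          have hδzero : ∀ k, ¬ k < m → δ k = 0 := fun k hk => by
            simp only [hδ]; exact if_neg hk
          refine ⟨fun k => δ k + (b - 2) * (if k = 0 then 0 else δ (k - 1)), fun k =>
            add_nonneg (hδpos k) (mul_nonneg (by linarith) (by
              split
              · exact le_refl 0
              · exact hδpos _)), ?_⟩
          have hDsplit : (X - C θ) * (X - C θ⁻¹) = (1 + X) ^ 2 + C (b - 2) * X := by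
            rw [hb]
            simp only [C_sub, C_neg, C_add, map_ofNat]
            linear_combination hCC
          have hQsum : Q = ∑ k ∈ range m, C (δ k) * X ^ k * (1 + X) ^ ((n - 2) - 2 * k) := by
            rw [hγsum]
            exact Finset.sum_congr rfl fun i hi => by
              simp only [hδ]; rw [if_pos (Finset.mem_range.mp hi)]
          have hrange : n / 2 + 1 = m + 1 := by omega
          calc P = (X - C θ) * (X - C θ⁻¹) * Q := hQ
            _ = (1 + X) ^ 2 * Q + C (b - 2) * X * Q := by rw [hDsplit]; ring
            _ = (∑ k ∈ range m, C (δ k) * X ^ k * (1 + X) ^ (n - 2 * k))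
                + ∑ k ∈ range m, C ((b - 2) * δ k) * X ^ (k + 1) * (1 + X) ^ (n - 2 * (k + 1)) := by
                rw [hQsum, Finset.mul_sum, Finset.mul_sum]
                congr 1
                · refine Finset.sum_congr rfl fun i hi => ?_
                  have hexp : n - 2 * i = ((n - 2) - 2 * i) + 2 := by
                    have := Finset.mem_range.mp hi
                    rw [hmdef] at this
                    omega
                  rw [hexp, pow_add]
                  ring
                · refine Finset.sum_congr rfl fun i hi => ?_
                  have hexp : n - 2 * (i + 1) = (n - 2) - 2 * i := by omega
                  rw [hexp, C_mul]
                  ring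
            _ = (∑ k ∈ range (n / 2 + 1), C (δ k) * X ^ k * (1 + X) ^ (n - 2 * k))
                + ∑ k ∈ range (n / 2 + 1),
                    C ((b - 2) * (if k = 0 then 0 else δ (k - 1))) * X ^ k * (1 + X) ^ (n - 2 * k) := by
                congr 1
                · refine Finset.sum_subset (Finset.range_subset_range.mpr (by omega)) ?_
                  intro x _ hxs
                  rw [hδzero x (by simpa using hxs)]
                  simp
                · rw [hrange]
                  conv_rhs => rw [Finset.sum_range_succ']
                  norm_num
            _ = ∑ k ∈ range (n / 2 + 1),
                  C (δ k + (b - 2) * (if k = 0 then 0 else δ (k - 1))) * X ^ k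
                    * (1 + X) ^ (n - 2 * k) := by
                rw [← Finset.sum_add_distrib]
                refine Finset.sum_congr rfl fun i _ => ?_
                rw [C_add]
                ring

private lemma gammaUnique (n : ℕ) (δ : ℕ → ℝ)
    (h : ∑ k ∈ range (n / 2 + 1), C (δ k) * X ^ k * (1 + X) ^ (n - 2 * k) = 0) :
    ∀ k < n / 2 + 1, δ k = 0 := by
  intro k
  induction k using Nat.strong_induction_on with
  | _ k IHk =>
    intro hk
    have h1X : (1 + X : ℝ[X]) = X + C 1 := by rw [C_1, add_comm]
    have hmon : ∀ j : ℕ, (X ^ j * (1 + X) ^ (n - 2 * j) : ℝ[X]).Monic := fun j => by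
      rw [h1X]
      exact (monic_X_pow j).mul ((monic_X_add_C 1).pow _)
    have hdegM : ∀ j ≤ n / 2, (X ^ j * (1 + X) ^ (n - 2 * j) : ℝ[X]).natDegree = n - j := by
      intro j hj
      rw [h1X, natDegree_mul (pow_ne_zero _ X_ne_zero)
        (((monic_X_add_C (1:ℝ)).pow _).ne_zero), natDegree_X_pow,
        natDegree_pow_X_add_C]
      omega
    have hc := congrArg (fun p => p.coeff (n - k)) h
    simp only [finset_sum_coeff, coeff_zero] at hc
    rw [Finset.sum_eq_single k ?h1 ?h2] at hc
    · rw [mul_assoc, coeff_C_mul] at hc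
      have hone : (X ^ k * (1 + X) ^ (n - 2 * k) : ℝ[X]).coeff (n - k) = 1 := by
        have hk' : k ≤ n / 2 := by omega
        rw [← hdegM k hk']
        exact (hmon k).coeff_natDegree
      rw [hone, mul_one] at hc
      exact hc
    · intro j hj hjk
      rw [mul_assoc, coeff_C_mul]
      rcases lt_or_gt_of_ne hjk with h1 | h1
      · rw [IHk j h1 (by have := Finset.mem_range.mp hj; omega), zero_mul]
      · rw [coeff_eq_zero_of_natDegree_lt, mul_zero]
        rw [hdegM j (by have := Finset.mem_range.mp hj; omega)]
        have hjn : j ≤ n / 2 := by have := Finset.mem_range.mp hj; omega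
        omega
    · intro hk'
      exact absurd (Finset.mem_range.mpr hk) hk'

/-- A real polynomial with nonnegative coefficients which is symmetric
with respect to `n` and has only real roots is γ-nonnegative: the coefficients of its
expansion `P(t) = Σ_{k=0}^{⌊n/2⌋} γ_k t^k (1+t)^{n-2k}` are all nonnegative. -/
theorem statement12 (n : ℕ) (P : Polynomial ℝ) (hdeg : P.natDegree ≤ n)
    (hnn : ∀ k : ℕ, 0 ≤ P.coeff k)
    (hsym : ∀ j : ℕ, j ≤ n → P.coeff j = P.coeff (n - j))
    (hreal : P.Splits)
    (γ : Fin (n / 2 + 1) → ℝ)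
    (hγ : P = ∑ k : Fin (n / 2 + 1),
      Polynomial.C (γ k) * X ^ (k : ℕ) * (1 + X) ^ (n - 2 * (k : ℕ))) :
    ∀ k, 0 ≤ γ k := by
  have hsymr : reflect n P = P := (reflectIff hdeg).mpr hsym
  obtain ⟨γ₀, hγ₀pos, hγ₀sum⟩ := keyLemma n P hdeg hnn hsymr hreal
  have hfin : P = ∑ j ∈ range (n / 2 + 1),
      C (if h : j < n / 2 + 1 then γ ⟨j, h⟩ else 0) * X ^ j * (1 + X) ^ (n - 2 * j) := by
    rw [hγ, ← Fin.sum_univ_eq_sum_range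
      (fun j => C (if h : j < n / 2 + 1 then γ ⟨j, h⟩ else 0) * X ^ j * (1 + X) ^ (n - 2 * j))
      (n / 2 + 1)]
    refine Finset.sum_congr rfl fun k _ => ?_
    simp only [dif_pos k.isLt, Fin.eta]
  set δ : ℕ → ℝ := fun j => (if h : j < n / 2 + 1 then γ ⟨j, h⟩ else 0) - γ₀ j with hδ
  have hzero : ∑ k ∈ range (n / 2 + 1), C (δ k) * X ^ k * (1 + X) ^ (n - 2 * k) = 0 := by
    have hsplit : ∑ k ∈ range (n / 2 + 1), C (δ k) * X ^ k * (1 + X) ^ (n - 2 * k)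
        = (∑ k ∈ range (n / 2 + 1),
            C (if h : k < n / 2 + 1 then γ ⟨k, h⟩ else 0) * X ^ k * (1 + X) ^ (n - 2 * k))
          - ∑ k ∈ range (n / 2 + 1), C (γ₀ k) * X ^ k * (1 + X) ^ (n - 2 * k) := by
      rw [← Finset.sum_sub_distrib]
      refine Finset.sum_congr rfl fun i _ => ?_
      simp only [hδ]
      rw [C_sub]
      ring
    rw [hsplit, ← hfin, ← hγ₀sum, sub_self]
  intro k
  have hzk := gammaUnique n δ hzero k k.isLt
  simp only [hδ, dif_pos k.isLt, Fin.eta, sub_eq_zero] at hzk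
  rw [hzk]
  exact hγ₀pos _
end

section
/- Let (W,S) be a Coxeter system with S finite, and for each n ∈ ℕ let a_n := |{w ∈ W : ℓ(w) = n}| (a finite number, since S is finite). Then the formal power series W(x) := Σ_{n≥0} a_n x^n ∈ ℤ[[x]] is rational: there exist polynomials p(x), q(x) ∈ ℤ[x] with q(0) ≠ 0 such that q(x)·W(x) = p(x) in ℤ[[x]]. -/
open List

namespace CoxStatement18

open scoped Classical

noncomputable section

variable {B W : Type*} [Group W] {M : CoxeterMatrix B} (cs : CoxeterSystem M W)

local prefix:100 "s" => cs.simple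
local prefix:100 "π" => cs.wordProd
local prefix:100 "ℓ" => cs.length
local prefix:100 "ris" => cs.rightInvSeq
local prefix:100 "lis" => cs.leftInvSeq


lemma ris_cons (i : B) (ω : List B) :
    ris (i :: ω) = (π ω)⁻¹ * s i * π ω :: ris ω := rfl

lemma lis_cons (i : B) (ω : List B) :
    lis (i :: ω) = s i :: List.map (MulAut.conj (s i)) (lis ω) := rfl

lemma lis_append (α β : List B) :
    lis (α ++ β) = lis α ++ List.map (MulAut.conj (π α)) (lis β) := by
  induction α with
  | nil => simp
  | cons i α ih =>
      rw [cons_append, lis_cons, lis_cons, ih, List.map_append, cs.wordProd_cons,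
        map_mul, MulAut.coe_mul, List.map_map, cons_append]

lemma lis_eq_map_ris (α : List B) :
    lis α = List.map (MulAut.conj (π α)) (ris α) := by
  induction α with
  | nil => simp
  | cons i α ih =>
      rw [lis_cons, ris_cons, List.map_cons, ih, List.map_map, cs.wordProd_cons]
      congr 1
      · simp only [MulAut.conj_apply, mul_inv_rev]
        group
      · apply List.map_congr_left
        intro x _
        simp only [Function.comp_apply, MulAut.conj_apply, mul_inv_rev]
        group

/-- The basic map on `W × ℤˣ` attached to a simple reflection. -/
def eta (i : B) : W × ℤˣ → W × ℤˣ :=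
  fun p => (s i * p.1 * (s i)⁻¹, if p.1 = s i then -p.2 else p.2)

lemma simple_conj_conj (i : B) (x : W) : s i * (s i * x * (s i)⁻¹) * (s i)⁻¹ = x := by
  have h := cs.simple_mul_simple_self i
  calc s i * (s i * x * (s i)⁻¹) * (s i)⁻¹ = (s i * s i) * x * (s i * s i)⁻¹ := by group
  _ = x := by rw [h]; simp

lemma eta_involutive (i : B) : Function.Involutive (eta cs i) := by
  intro p
  unfold eta
  have h2 : (s i * p.1 * (s i)⁻¹ = s i) ↔ (p.1 = s i) := by
    constructor
    · intro h
      have h3 := simple_conj_conj cs i p.1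
      rw [h] at h3
      rw [← h3]
      group
    · intro h; rw [h]; group
  refine Prod.ext ?_ ?_
  · exact simple_conj_conj cs i p.1
  · show (if (s i * p.1 * (s i)⁻¹) = s i then -(if p.1 = s i then -p.2 else p.2)
        else (if p.1 = s i then -p.2 else p.2)) = p.2
    by_cases h : p.1 = s i
    · rw [if_pos (h2.mpr h), if_pos h, neg_neg]
    · rw [if_neg (fun hh => h (h2.mp hh)), if_neg h]

/-- `eta` as a permutation. -/
def etaPerm (i : B) : Equiv.Perm (W × ℤˣ) := (eta_involutive cs i).toPerm

lemma etaPerm_apply (i : B) (p : W × ℤˣ) :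
    etaPerm cs i p = (s i * p.1 * (s i)⁻¹, if p.1 = s i then -p.2 else p.2) := rfl

/-- Key formula: the product of the permutations along a word acts by conjugation by `π ω`,
with sign the parity of the multiplicity in the right inversion sequence. -/
lemma prod_map_etaPerm (ω : List B) (w : W) (ε : ℤˣ) :
    ((ω.map (etaPerm cs)).prod) (w, ε) =
      (π ω * w * (π ω)⁻¹, (-1 : ℤˣ) ^ ((ris ω).count w) * ε) := by
  induction ω with
  | nil => simp
  | cons i ω ih =>
      rw [List.map_cons, List.prod_cons, Equiv.Perm.mul_apply, ih, etaPerm_apply]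
      have hc : (π ω * w * (π ω)⁻¹ = s i) ↔ ((π ω)⁻¹ * s i * π ω = w) := by
        constructor
        · intro h; rw [← h]; group
        · intro h; rw [← h]; group
      refine Prod.ext ?_ ?_
      · show s i * (π ω * w * (π ω)⁻¹) * (s i)⁻¹ = π (i :: ω) * w * (π (i :: ω))⁻¹
        rw [cs.wordProd_cons]
        group
      · show (if (π ω * w * (π ω)⁻¹) = s i then -((-1:ℤˣ)^((ris ω).count w) * ε)
            else (-1:ℤˣ)^((ris ω).count w) * ε) = (-1:ℤˣ)^((ris (i :: ω)).count w) * ε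
        rw [ris_cons, List.count_cons]
        by_cases h : (π ω)⁻¹ * s i * π ω = w
        · rw [if_pos (hc.mpr h), if_pos (by exact beq_iff_eq.mpr h), pow_add, pow_one,
            mul_assoc, neg_one_mul, mul_neg]
        · rw [if_neg (fun hh => h (hc.mp hh)),
            if_neg (by simpa using h), add_zero]


section Dihedral

variable (i j : B)

/-- The word `[i,j,i,j,...]` of length `2*m`. -/
def dihedralWord (m : ℕ) : List B := (List.replicate m [i, j]).flatten

lemma dihedralWord_succ (m : ℕ) :
    dihedralWord i j (m+1) = i :: j :: dihedralWord i j m := by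
  simp [dihedralWord, List.replicate_succ]

lemma length_dihedralWord (m : ℕ) : (dihedralWord i j m).length = 2 * m := by
  induction m with
  | zero => rfl
  | succ m ih => rw [dihedralWord_succ]; simp only [List.length_cons, ih]; omega

lemma wordProd_dihedralWord (m : ℕ) :
    π (dihedralWord i j m) = (s i * s j) ^ m := by
  induction m with
  | zero => simp [dihedralWord]
  | succ m ih =>
      rw [dihedralWord_succ, cs.wordProd_cons, cs.wordProd_cons, ih, pow_succ']
      rw [mul_assoc]

lemma key_shift (b : ℕ) : (s j * s i) ^ b * s j = s j * (s i * s j) ^ b := by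
  have h : SemiconjBy (s j) (s i * s j) (s j * s i) := by
    unfold SemiconjBy
    group
  exact ((h.pow_right b).eq).symm

lemma inv_simple_mul (a b : B) : (s a * s b)⁻¹ = s b * s a := by
  rw [mul_inv_rev, cs.inv_simple, cs.inv_simple]

lemma ris_dihedralWord_getD (m : ℕ) : ∀ k, k < 2 * m →
    (ris (dihedralWord i j m)).getD k 1 = s j * (s i * s j) ^ (2 * m - 1 - k) := by
  induction m with
  | zero => omega
  | succ m ih =>
      intro k hk
      rw [dihedralWord_succ, ris_cons cs, ris_cons cs]
      match k with
      | 0 =>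
          rw [List.getD_cons_zero]
          rw [cs.wordProd_cons, wordProd_dihedralWord]
          have harith : 2 * (m + 1) - 1 - 0 = (m + m) + 1 := by omega
          rw [harith]
          calc (s j * (s i * s j) ^ m)⁻¹ * s i * (s j * (s i * s j) ^ m)
              = ((s i * s j)⁻¹) ^ m * (s j)⁻¹ * s i * (s j * (s i * s j) ^ m) := by
                rw [mul_inv_rev, inv_pow]
            _ = (s j * s i) ^ m * s j * s i * (s j * (s i * s j) ^ m) := by
                rw [inv_simple_mul, cs.inv_simple]
            _ = s j * (s i * s j) ^ m * s i * (s j * (s i * s j) ^ m) := by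
                rw [key_shift]
            _ = s j * (s i * s j) ^ ((m + m) + 1) := by
                have hp : s i * (s j * (s i * s j) ^ m) = (s i * s j) ^ (m + 1) := by
                  rw [pow_succ', mul_assoc]
                rw [mul_assoc (s j * (s i * s j) ^ m) (s i), hp, mul_assoc, ← pow_add,
                  ← add_assoc]
      | 1 =>
          rw [List.getD_cons_succ, List.getD_cons_zero, wordProd_dihedralWord]
          have harith : 2 * (m + 1) - 1 - 1 = m + m := by omega
          rw [harith]
          calc ((s i * s j) ^ m)⁻¹ * s j * (s i * s j) ^ m
              = (s j * s i) ^ m * s j * (s i * s j) ^ m := by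
                rw [← inv_simple_mul cs i j, inv_pow]
            _ = s j * (s i * s j) ^ (m + m) := by
                rw [key_shift, mul_assoc, ← pow_add]
      | (k + 2) =>
          rw [List.getD_cons_succ, List.getD_cons_succ]
          rw [ih k (by omega)]
          congr 2
          omega

lemma count_ris_dihedralWord_even (hm : (s i * s j) ^ (M i j) = 1) (w : W) :
    Even ((ris (dihedralWord i j (M i j))).count w) := by
  set m := M i j with hmdef
  set F := ris (dihedralWord i j m) with hF
  have hlen : F.length = 2 * m := by
    rw [hF, CoxeterSystem.length_rightInvSeq, length_dihedralWord]
  have htd : F.take m = F.drop m := by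
    apply List.ext_getElem
    · simp [hlen]; omega
    · intro k hk1 hk2
      rw [List.length_take, hlen] at hk1
      have hkm : k < m := by omega
      rw [List.getElem_take, List.getElem_drop]
      rw [← List.getD_eq_getElem F 1, ← List.getD_eq_getElem F 1]
      rw [hF, ris_dihedralWord_getD cs i j m k (by omega),
        ris_dihedralWord_getD cs i j m (m + k) (by omega)]
      have h1 : 2 * m - 1 - k = (2 * m - 1 - (m + k)) + m := by omega
      rw [h1, pow_add, hmdef, hm, mul_one]
  have hsplit : F = F.take m ++ F.drop m := (List.take_append_drop m F).symm
  rw [hsplit, List.count_append, ← htd]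
  exact ⟨(F.take m).count w, by omega⟩

end Dihedral

lemma prod_map_etaPerm_dihedral (i j : B) (m : ℕ) :
    ((dihedralWord i j m).map (etaPerm cs)).prod = (etaPerm cs i * etaPerm cs j) ^ m := by
  induction m with
  | zero => simp [dihedralWord]
  | succ m ih =>
      rw [dihedralWord_succ, List.map_cons, List.map_cons, List.prod_cons, List.prod_cons, ih,
        pow_succ']
      rw [mul_assoc]

lemma etaPerm_isLiftable : M.IsLiftable (fun i => etaPerm cs i) := by
  intro i j
  simp only
  by_cases h0 : M i j = 0
  · rw [h0, pow_zero]
  · rw [← prod_map_etaPerm_dihedral]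
    apply Equiv.ext
    rintro ⟨w, ε⟩
    rw [prod_map_etaPerm]
    rw [wordProd_dihedralWord, cs.simple_mul_simple_pow]
    rw [Even.neg_one_pow (count_ris_dihedralWord_even cs i j (cs.simple_mul_simple_pow i j) w)]
    simp

/-- The homomorphism `W →* Perm (W × ℤˣ)`. -/
def etaHom : W →* Equiv.Perm (W × ℤˣ) := cs.lift ⟨fun i => etaPerm cs i, etaPerm_isLiftable cs⟩

lemma etaHom_wordProd (ω : List B) :
    etaHom cs (π ω) = (ω.map (etaPerm cs)).prod := by
  rw [CoxeterSystem.wordProd, ← List.prod_hom _ (etaHom cs), List.map_map]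
  congr 1
  apply List.map_congr_left
  intro b _
  exact cs.lift_apply_simple (etaPerm_isLiftable cs) b

lemma count_ris_parity {σ σ' : List B} (h : π σ = π σ') (w : W) :
    (-1 : ℤˣ) ^ ((ris σ).count w) = (-1 : ℤˣ) ^ ((ris σ').count w) := by
  have h1 := prod_map_etaPerm cs σ w 1
  have h2 := prod_map_etaPerm cs σ' w 1
  rw [← etaHom_wordProd] at h1 h2
  rw [h, h2] at h1
  have := congrArg Prod.snd h1
  simpa using this.symm

lemma count_lis_parity {σ σ' : List B} (h : π σ = π σ') (t : W) :
    (-1 : ℤˣ) ^ ((lis σ).count t) = (-1 : ℤˣ) ^ ((lis σ').count t) := by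
  have h' : π (σ.reverse) = π (σ'.reverse) := by
    rw [cs.wordProd_reverse, cs.wordProd_reverse, h]
  have := count_ris_parity cs h' t
  rwa [cs.rightInvSeq_reverse, cs.rightInvSeq_reverse, List.count_reverse,
    List.count_reverse] at this

lemma odd_count_lis_self {t : W} (ht : cs.IsReflection t) :
    ∃ τ : List B, π τ = t ∧ Odd ((lis τ).count t) := by
  obtain ⟨wv, i, rfl⟩ := ht
  obtain ⟨α, rfl⟩ := cs.wordProd_surjective wv
  refine ⟨α ++ i :: α.reverse, ?_, ?_⟩
  · rw [cs.wordProd_append, cs.wordProd_cons, cs.wordProd_reverse, mul_assoc]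
  · rw [lis_append, List.count_append, lis_cons, List.map_cons, List.count_cons]
    set t := π α * s i * (π α)⁻¹ with htdef
    have hhead : (MulAut.conj (π α)) (s i) = t := by
      simp [MulAut.conj_apply, htdef]
    rw [hhead]
    have hbeq : (t == t) = true := beq_iff_eq.mpr rfl
    rw [if_pos hbeq]
    have hc1 : (lis α).count t = (ris α).count (s i) := by
      rw [lis_eq_map_ris]
      have : t = (MulAut.conj (π α)) (s i) := hhead.symm
      rw [this, List.count_map_of_injective _ _ (MulAut.conj (π α)).injective]
    have hc2 : (((lis α.reverse).map (MulAut.conj (s i))).map (MulAut.conj (π α))).count t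
        = (ris α).count (s i) := by
      rw [List.map_map]
      have hfun : ⇑(MulAut.conj (π α)) ∘ ⇑(MulAut.conj (s i))
          = ⇑(MulAut.conj (π α) * MulAut.conj (s i)) := by
        rw [MulAut.coe_mul]
      rw [hfun]
      have ht2 : t = (MulAut.conj (π α) * MulAut.conj (s i)) (s i) := by
        simp only [MulAut.mul_apply, MulAut.conj_apply, htdef, cs.inv_simple]
        rw [cs.simple_mul_simple_self]
        group
      rw [ht2, List.count_map_of_injective _ _
        (MulAut.conj (π α) * MulAut.conj (s i)).injective]
      rw [cs.leftInvSeq_reverse, List.count_reverse]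
    rw [hc1, hc2]
    exact ⟨(ris α).count (s i), by omega⟩

lemma mem_lis_of_isLeftInversion {t w : W} (ht : cs.IsReflection t) (hlt : ℓ (t * w) < ℓ w)
    {σ : List B} (hred : cs.IsReduced σ) (hw : π σ = w) : t ∈ lis σ := by
  obtain ⟨σ', hred', heq'⟩ := cs.exists_reduced_word' (t * w)
  obtain ⟨τ, hτ, hodd⟩ := odd_count_lis_self cs ht
  have hprod : π (τ ++ σ') = w := by
    rw [cs.wordProd_append, hτ, ← heq', ← mul_assoc, ht.mul_self, one_mul]
  have hpar := count_lis_parity cs (σ := σ) (σ' := τ ++ σ') (by rw [hw, hprod]) t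
  have hnotmem : t ∉ lis σ' := by
    intro hmem
    have hinv := cs.isLeftInversion_of_mem_leftInvSeq hred' hmem
    rw [← heq'] at hinv
    have : ℓ (t * (t * w)) < ℓ (t * w) := hinv.2
    rw [← mul_assoc, ht.mul_self, one_mul] at this
    omega
  have hcount' : ((lis (τ ++ σ')).count t) = (lis τ).count t + (lis σ').count t := by
    rw [lis_append, List.count_append, hτ]
    congr 1
    have ht2 : t = (MulAut.conj t) t := by simp [MulAut.conj_apply]
    nth_rw 1 [ht2]
    rw [List.count_map_of_injective _ _ (MulAut.conj t).injective]
  rw [List.count_eq_zero_of_not_mem hnotmem, add_zero] at hcount'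
  rw [hcount'] at hpar
  rw [hodd.neg_one_pow] at hpar
  rcases Nat.even_or_odd ((lis σ).count t) with he | ho
  · rw [he.neg_one_pow] at hpar
    exact absurd hpar (by decide)
  · have : (lis σ).count t ≠ 0 := by
      intro h0
      rw [h0] at ho
      simpa using ho
    exact List.count_pos_iff.mp (Nat.pos_of_ne_zero this)

/-- Strong exchange property. -/
lemma exists_eraseIdx_of_isLeftInversion {t w : W} (ht : cs.IsReflection t)
    (hlt : ℓ (t * w) < ℓ w) {σ : List B} (hred : cs.IsReduced σ) (hw : π σ = w) :
    ∃ j, j < σ.length ∧ t * w = π (σ.eraseIdx j) := by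
  have hmem := mem_lis_of_isLeftInversion cs ht hlt hred hw
  obtain ⟨j, hj, hget⟩ := List.getElem_of_mem hmem
  have hjlen : j < σ.length := by
    rw [CoxeterSystem.length_leftInvSeq] at hj
    exact hj
  refine ⟨j, hjlen, ?_⟩
  have := cs.getD_leftInvSeq_mul_wordProd σ j
  rw [List.getD_eq_getElem _ 1 hj, hget, hw] at this
  exact this

/-! ### Deletion, parabolic subgroups, coset decompositions -/

lemma eraseIdx_append_left {γ : Type*} : ∀ (l l' : List γ) (j : ℕ), j < l.length →
    (l ++ l').eraseIdx j = l.eraseIdx j ++ l'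
  | [], _, j, h => by simp at h
  | a :: l, l', 0, _ => by simp
  | a :: l, l', j+1, h => by
      simp only [cons_append, List.eraseIdx_cons_succ]
      rw [eraseIdx_append_left l l' j (by simpa using h)]

lemma eraseIdx_append_right {γ : Type*} : ∀ (l l' : List γ) (j : ℕ), l.length ≤ j →
    (l ++ l').eraseIdx j = l ++ l'.eraseIdx (j - l.length)
  | [], _, j, _ => by simp
  | a :: l, l', 0, h => by simp at h
  | a :: l, l', j+1, h => by
      simp only [cons_append, List.eraseIdx_cons_succ]
      have h2 : j + 1 - (a :: l).length = j - l.length := by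
        simp only [List.length_cons]; omega
      rw [h2, eraseIdx_append_right l l' j (by simpa using h)]

lemma exists_shorter_word (ω : List B) (h : ¬ cs.IsReduced ω) :
    ∃ ω' : List B, π ω' = π ω ∧ ω'.length + 2 = ω.length ∧ ∀ b ∈ ω', b ∈ ω := by
  induction ω with
  | nil => exact absurd (by simp [CoxeterSystem.IsReduced]) h
  | cons i ω ih =>
      by_cases hred : cs.IsReduced ω
      · rcases cs.length_simple_mul (π ω) i with hc | hc
        · exfalso
          apply h
          show ℓ (π (i :: ω)) = (i :: ω).length
          rw [cs.wordProd_cons, hc, hred]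
          simp
        · have hlt : ℓ (s i * π ω) < ℓ (π ω) := by
            have := cs.length_simple_mul_ne (π ω) i
            omega
          obtain ⟨j, hj, heq⟩ := exists_eraseIdx_of_isLeftInversion cs
            (cs.isReflection_simple i) hlt hred rfl
          refine ⟨ω.eraseIdx j, ?_, ?_, ?_⟩
          · rw [← heq, cs.wordProd_cons]
          · have := List.length_eraseIdx_add_one hj
            simp only [List.length_cons]
            omega
          · exact fun b hb => List.mem_cons_of_mem i (List.eraseIdx_subset hb)
      · obtain ⟨ω', h1, h2, h3⟩ := ih hred
        refine ⟨i :: ω', ?_, ?_, ?_⟩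
        · rw [cs.wordProd_cons, cs.wordProd_cons, h1]
        · simp only [List.length_cons]; omega
        · intro b hb
          rcases List.mem_cons.mp hb with rfl | hb
          · exact List.mem_cons_self
          · exact List.mem_cons_of_mem i (h3 b hb)

/-- The standard parabolic subgroup generated by the simple reflections in `K`. -/
def WP (K : Set B) : Subgroup W := Subgroup.closure (cs.simple '' K)

lemma simple_mem_WP {K : Set B} {i : B} (hi : i ∈ K) : s i ∈ WP cs K :=
  Subgroup.subset_closure ⟨i, hi, rfl⟩

lemma wordProd_mem_WP (K : Set B) {ω : List B} (h : ∀ b ∈ ω, b ∈ K) : π ω ∈ WP cs K := by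
  induction ω with
  | nil => rw [cs.wordProd_nil]; exact one_mem _
  | cons i ω ih =>
      rw [cs.wordProd_cons]
      exact mul_mem (simple_mem_WP cs (h i (List.mem_cons_self)))
        (ih fun b hb => h b (List.mem_cons_of_mem i hb))

lemma exists_word_subset (K : Set B) (w : W) (hw : w ∈ WP cs K) :
    ∃ ω : List B, π ω = w ∧ ∀ b ∈ ω, b ∈ K := by
  induction hw using Subgroup.closure_induction with
  | mem x hx =>
      obtain ⟨i, hi, rfl⟩ := hx
      exact ⟨[i], by simp, by simpa using hi⟩
  | one => exact ⟨[], by simp, by simp⟩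
  | mul x y _ _ ihx ihy =>
      obtain ⟨ω₁, h1, h1'⟩ := ihx
      obtain ⟨ω₂, h2, h2'⟩ := ihy
      refine ⟨ω₁ ++ ω₂, by rw [cs.wordProd_append, h1, h2], ?_⟩
      intro b hb
      rcases List.mem_append.mp hb with hb | hb
      exacts [h1' b hb, h2' b hb]
  | inv x _ ihx =>
      obtain ⟨ω, h1, h1'⟩ := ihx
      exact ⟨ω.reverse, by rw [cs.wordProd_reverse, h1], fun b hb => h1' b (by simpa using hb)⟩

lemma exists_reduced_word_subset (K : Set B) (w : W) (hw : w ∈ WP cs K) :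
    ∃ ω : List B, cs.IsReduced ω ∧ π ω = w ∧ ∀ b ∈ ω, b ∈ K := by
  obtain ⟨ω, hπ, hsub⟩ := exists_word_subset cs K w hw
  clear hw
  have aux : ∀ n (w : W) (ω : List B), π ω = w → (∀ b ∈ ω, b ∈ K) → ω.length = n →
      ∃ ω : List B, cs.IsReduced ω ∧ π ω = w ∧ ∀ b ∈ ω, b ∈ K := by
    intro n
    induction n using Nat.strong_induction_on with
    | _ n ih =>
        intro w ω hπ hsub hn
        by_cases hred : cs.IsReduced ω
        · exact ⟨ω, hred, hπ, hsub⟩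
        · obtain ⟨ω', h1, h2, h3⟩ := exists_shorter_word cs ω hred
          exact ih ω'.length (by omega) w ω' (by rw [h1, hπ])
            (fun b hb => hsub b (h3 b hb)) rfl
  exact aux ω.length w ω hπ hsub rfl

/-- F1: a nontrivial element of a standard parabolic has a left descent in `K` which stays
in the parabolic. -/
lemma exists_leftDescent_WP {K : Set B} {w : W} (hw : w ∈ WP cs K) (hne : w ≠ 1) :
    ∃ i ∈ K, cs.IsLeftDescent w i ∧ s i * w ∈ WP cs K := by
  obtain ⟨ω, hred, hπ, hsub⟩ := exists_reduced_word_subset cs K w hw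
  match ω, hred, hπ, hsub with
  | [], _, hπ, _ => exact absurd (by rw [← hπ, cs.wordProd_nil]) hne
  | i :: τ, hred, hπ, hsub =>
      have hsiw : s i * w = π τ := by
        rw [← hπ, cs.wordProd_cons, ← mul_assoc, cs.simple_mul_simple_self, one_mul]
      refine ⟨i, hsub i (List.mem_cons_self), ?_, ?_⟩
      · show ℓ (s i * w) < ℓ w
        rw [hsiw, ← hπ]
        have h1 : ℓ (π τ) ≤ τ.length := cs.length_wordProd_le τ
        have h2 : ℓ (π (i :: τ)) = τ.length + 1 := by
          rw [hred]; simp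
        omega
      · rw [hsiw]
        exact wordProd_mem_WP cs K fun b hb => hsub b (List.mem_cons_of_mem i hb)

/-- Minimal length representatives of cosets `W_K w` exist. -/
lemma exists_min_coset (K : Set B) (w : W) :
    ∃ v : W, (∃ u ∈ WP cs K, w = u * v) ∧ (∀ u ∈ WP cs K, ℓ v ≤ ℓ (u * v)) := by
  have hne : ∃ n, ∃ x : W, (∃ u ∈ WP cs K, x = u * w) ∧ ℓ x = n :=
    ⟨ℓ w, w, ⟨1, one_mem _, (one_mul w).symm⟩, rfl⟩
  classical
  obtain ⟨x, ⟨u₀, hu₀, hxw⟩, hxlen⟩ := Nat.find_spec hne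
  refine ⟨x, ⟨u₀⁻¹, inv_mem hu₀, by rw [hxw, ← mul_assoc, inv_mul_cancel, one_mul]⟩, ?_⟩
  intro u hu
  have hmem : (∃ u' ∈ WP cs K, u * x = u' * w) ∧ ℓ (u * x) = ℓ (u * x) :=
    ⟨⟨u * u₀, mul_mem hu hu₀, by rw [hxw, mul_assoc]⟩, rfl⟩
  have := Nat.find_min' hne ⟨u * x, hmem.1, rfl⟩
  omega

/-- Additivity of lengths over minimal coset representatives. -/
lemma length_mul_of_min {K : Set B} {v : W} (hmin : ∀ u ∈ WP cs K, ℓ v ≤ ℓ (u * v)) :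
    ∀ u ∈ WP cs K, ℓ (u * v) = ℓ u + ℓ v := by
  have main : ∀ n u, u ∈ WP cs K → ℓ u = n → ℓ (u * v) = ℓ u + ℓ v := by
    intro n
    induction n using Nat.strong_induction_on with
    | _ n ih =>
        intro u hu hlen
        rcases eq_or_ne u 1 with rfl | hne
        · simp
        obtain ⟨i, hiK, hdesc, hmem⟩ := exists_leftDescent_WP cs hu hne
        have hlen' : ℓ (s i * u) + 1 = ℓ u := by
          have := cs.length_simple_mul u i
          have hd : ℓ (s i * u) < ℓ u := hdesc
          omega
        set u' := s i * u with hu'def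
        have hsiu : s i * u' = u := by
          rw [hu'def, ← mul_assoc, cs.simple_mul_simple_self, one_mul]
        have ihu' : ℓ (u' * v) = ℓ u' + ℓ v := ih (ℓ u') (by omega) u' hmem rfl
        rcases cs.length_simple_mul (u' * v) i with hc | hc
        · have huv : u * v = s i * (u' * v) := by rw [← hsiu, mul_assoc]
          rw [huv, hc, ihu']
          omega
        · exfalso
          -- exchange situation
          have hlt : ℓ (s i * (u' * v)) < ℓ (u' * v) := by omega
          obtain ⟨γ, hγred, hγeq, hγsub⟩ := exists_reduced_word_subset cs K u' hmem
          obtain ⟨δ, hδred, hδeq⟩ := cs.exists_reduced_word' v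
          have hπγδ : π (γ ++ δ) = u' * v := by rw [cs.wordProd_append, hγeq, ← hδeq]
          have hredγδ : cs.IsReduced (γ ++ δ) := by
            show ℓ (π (γ ++ δ)) = (γ ++ δ).length
            rw [hπγδ, ihu', List.length_append]
            have e1 : γ.length = ℓ u' := by rw [← hγred, hγeq]
            have e2 : δ.length = ℓ v := by rw [← hδred, ← hδeq]
            omega
          obtain ⟨j, hj, heq⟩ := exists_eraseIdx_of_isLeftInversion cs
            (cs.isReflection_simple i) hlt hredγδ hπγδ
          have huv : s i * (u' * v) = u * v := by rw [← mul_assoc, hsiu]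
          rw [huv] at heq
          rcases lt_or_ge j γ.length with hjγ | hjγ
          · rw [eraseIdx_append_left γ δ j hjγ, cs.wordProd_append, ← hδeq] at heq
            have hu_eq : u = π (γ.eraseIdx j) := mul_right_cancel heq
            have h1 : ℓ u ≤ (γ.eraseIdx j).length := hu_eq ▸ cs.length_wordProd_le _
            have h2 : (γ.eraseIdx j).length + 1 = γ.length := List.length_eraseIdx_add_one hjγ
            have h3 : γ.length = ℓ u' := by rw [← hγred, hγeq]
            omega
          · rw [eraseIdx_append_right γ δ j hjγ, cs.wordProd_append, hγeq] at heq
            set δ' := δ.eraseIdx (j - γ.length) with hδ'def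
            have hδ'eq : π δ' = (u'⁻¹ * u) * v := by
              have step : π δ' = u'⁻¹ * (u * v) := by rw [heq]; group
              rw [step, mul_assoc]
            have hmem' : u'⁻¹ * u ∈ WP cs K := mul_mem (inv_mem hmem) hu
            have h1 : ℓ v ≤ ℓ (π δ') := hδ'eq ▸ hmin _ hmem'
            have h2 : ℓ (π δ') ≤ δ'.length := cs.length_wordProd_le _
            have hjδ : j - γ.length < δ.length := by
              rw [List.length_append] at hj
              omega
            have h3 : δ'.length + 1 = δ.length := List.length_eraseIdx_add_one hjδ
            have h4 : δ.length = ℓ v := by rw [← hδred, ← hδeq]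
            omega
  exact fun u hu => main (ℓ u) u hu rfl

lemma not_descent_of_min {K : Set B} {v : W} (hmin : ∀ u ∈ WP cs K, ℓ v ≤ ℓ (u * v)) :
    ∀ i ∈ K, ¬ cs.IsLeftDescent v i := by
  intro i hi hd
  have h1 : ℓ (s i * v) < ℓ v := hd
  have h2 := hmin (s i) (simple_mem_WP cs hi)
  omega

/-- Existence of the parabolic coset decomposition. -/
lemma exists_decomp (K : Set B) (w : W) :
    ∃ u v : W, u ∈ WP cs K ∧ (∀ i ∈ K, ¬ cs.IsLeftDescent v i) ∧ w = u * v ∧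
      ℓ w = ℓ u + ℓ v := by
  obtain ⟨v, ⟨u, hu, hw⟩, hmin⟩ := exists_min_coset cs K w
  exact ⟨u, v, hu, not_descent_of_min cs hmin, hw,
    by rw [hw]; exact length_mul_of_min cs hmin u hu⟩

/-- An element with no left descent in `K` is the minimal coset representative. -/
lemma min_of_not_descent {K : Set B} {v : W} (hv : ∀ i ∈ K, ¬ cs.IsLeftDescent v i) :
    ∀ u ∈ WP cs K, ℓ v ≤ ℓ (u * v) := by
  obtain ⟨v₀, ⟨u₀, hu₀, hveq⟩, hmin⟩ := exists_min_coset cs K v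
  rcases eq_or_ne u₀ 1 with rfl | hne
  · rw [one_mul] at hveq
    rw [hveq]
    exact hmin
  · exfalso
    obtain ⟨i, hiK, hdesc, hmem⟩ := exists_leftDescent_WP cs hu₀ hne
    apply hv i hiK
    show ℓ (s i * v) < ℓ v
    have h1 : ℓ (s i * u₀ * v₀) = ℓ (s i * u₀) + ℓ v₀ := length_mul_of_min cs hmin _ hmem
    have h2 : ℓ (u₀ * v₀) = ℓ u₀ + ℓ v₀ := length_mul_of_min cs hmin _ hu₀
    have h3 : ℓ (s i * u₀) < ℓ u₀ := hdesc
    rw [hveq, ← mul_assoc, h1, h2]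
    omega

lemma decomp_unique {K : Set B} {u₁ v₁ u₂ v₂ : W} (h1 : u₁ ∈ WP cs K)
    (hv1 : ∀ i ∈ K, ¬ cs.IsLeftDescent v₁ i) (h2 : u₂ ∈ WP cs K)
    (hv2 : ∀ i ∈ K, ¬ cs.IsLeftDescent v₂ i) (heq : u₁ * v₁ = u₂ * v₂) :
    u₁ = u₂ ∧ v₁ = v₂ := by
  set u := u₂⁻¹ * u₁ with hudef
  have humem : u ∈ WP cs K := mul_mem (inv_mem h2) h1
  have hv2eq : v₂ = u * v₁ := by
    rw [hudef, mul_assoc, heq]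
    group
  rcases eq_or_ne u 1 with h | hne
  · rw [h, one_mul] at hv2eq
    constructor
    · rw [hudef] at h
      have := congrArg (u₂ * ·) h
      simpa [← mul_assoc] using this
    · exact hv2eq.symm
  · exfalso
    obtain ⟨i, hiK, hdesc, hmem⟩ := exists_leftDescent_WP cs humem hne
    apply hv2 i hiK
    show ℓ (s i * v₂) < ℓ v₂
    have hmin := min_of_not_descent cs hv1
    have ha : ℓ (s i * u * v₁) = ℓ (s i * u) + ℓ v₁ := length_mul_of_min cs hmin _ hmem
    have hb : ℓ (u * v₁) = ℓ u + ℓ v₁ := length_mul_of_min cs hmin _ humem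
    have hc : ℓ (s i * u) < ℓ u := hdesc
    rw [hv2eq, ← mul_assoc, ha, hb]
    omega

/-- F3: if every element of `K` is a left descent of `w ∈ W_K`, then `w` has maximal
length in `W_K`. -/
lemma length_le_of_all_descents {K : Set B} {w : W} (hw : w ∈ WP cs K)
    (hd : ∀ i ∈ K, cs.IsLeftDescent w i) : ∀ u ∈ WP cs K, ℓ u ≤ ℓ w := by
  set x := w⁻¹ with hxdef
  have hxmem : x ∈ WP cs K := inv_mem hw
  have hxlen : ℓ x = ℓ w := cs.length_inv w
  have hxd : ∀ i ∈ K, ℓ (x * s i) < ℓ x := by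
    intro i hi
    have h1 : ℓ (x * s i) = ℓ (s i * w) := by
      rw [← cs.length_inv (x * s i), hxdef]
      congr 1
      rw [mul_inv_rev, cs.inv_simple, inv_inv]
    rw [h1, hxlen]
    exact hd i hi
  have main : ∀ n u, u ∈ WP cs K → ℓ u = n → ℓ (x * u) + ℓ u = ℓ x := by
    intro n
    induction n using Nat.strong_induction_on with
    | _ n ih =>
        intro u hu hlen
        rcases eq_or_ne u 1 with rfl | hne
        · simp
        obtain ⟨i, hiK, hdesc, hmem⟩ := exists_leftDescent_WP cs hu hne
        have hlen' : ℓ (s i * u) + 1 = ℓ u := by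
          have := cs.length_simple_mul u i
          have hdd : ℓ (s i * u) < ℓ u := hdesc
          omega
        set u' := s i * u with hu'def
        have hsiu : s i * u' = u := by
          rw [hu'def, ← mul_assoc, cs.simple_mul_simple_self, one_mul]
        have ihu' : ℓ (x * u') + ℓ u' = ℓ x := ih (ℓ u') (by omega) u' hmem rfl
        set t := x * s i * x⁻¹ with htdef
        have ht : cs.IsReflection t := ⟨x, i, rfl⟩
        have htx : t * (x * u') = x * u := by
          rw [htdef, ← hsiu]
          group
        -- x = (x * u') * u'⁻¹ is a reduced factorization
        obtain ⟨α, hαred, hαeq⟩ := cs.exists_reduced_word' (x * u')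
        obtain ⟨β, hβred, hβeq, hβsub⟩ := exists_reduced_word_subset cs K u'⁻¹ (inv_mem hmem)
        have hπαβ : π (α ++ β) = x := by
          rw [cs.wordProd_append, ← hαeq, hβeq]
          group
        have hredαβ : cs.IsReduced (α ++ β) := by
          show ℓ (π (α ++ β)) = (α ++ β).length
          rw [hπαβ, List.length_append]
          have e1 : α.length = ℓ (x * u') := by rw [← hαred, ← hαeq]
          have e2 : β.length = ℓ u' := by rw [← hβred, hβeq, cs.length_inv]
          omega
        have htinv : ℓ (t * x) < ℓ x := by
          have : t * x = x * s i := by rw [htdef]; group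
          rw [this]
          exact hxd i hiK
        have hmemt := mem_lis_of_isLeftInversion cs ht htinv hredαβ hπαβ
        rw [lis_append] at hmemt
        rcases List.mem_append.mp hmemt with hmemα | hmemβ
        · have hinv := cs.isLeftInversion_of_mem_leftInvSeq hαred hmemα
          rw [← hαeq] at hinv
          have h1 : ℓ (t * (x * u')) < ℓ (x * u') := hinv.2
          rw [htx] at h1
          have h2 : ℓ x ≤ ℓ (x * u) + ℓ u := by
            have h5 := cs.length_mul_le (x * u) u⁻¹
            rw [mul_assoc, mul_inv_cancel, mul_one, cs.length_inv u] at h5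
            exact h5
          omega
        · exfalso
          obtain ⟨r, hr, hconj⟩ := List.mem_map.mp hmemβ
          have hrinv := cs.isLeftInversion_of_mem_leftInvSeq hβred hr
          rw [hβeq] at hrinv
          have h1 : ℓ (r * u'⁻¹) < ℓ u'⁻¹ := hrinv.2
          have hre : r = u'⁻¹ * s i * u' := by
            have : (π α) * r * (π α)⁻¹ = t := by
              rw [← hconj]
              simp [MulAut.conj_apply]
            rw [← hαeq] at this
            have h2 : r = (x * u')⁻¹ * t * (x * u') := by
              rw [← this]
              group
            rw [h2, htdef]
            group
          have h3 : r * u'⁻¹ = u'⁻¹ * s i := by rw [hre]; group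
          rw [h3] at h1
          have h4 : ℓ (u'⁻¹ * s i) = ℓ u := by
            rw [← cs.length_inv, mul_inv_rev, cs.inv_simple, inv_inv, hsiu]
          rw [h4, cs.length_inv] at h1
          omega
  intro u hu
  have := main (ℓ u) u hu rfl
  omega

/-! ### Counting and power series -/

section Counting

variable [Finite B]

lemma finite_level (n : ℕ) : {w : W | ℓ w = n}.Finite := by
  have h1 : {w : W | ℓ w = n} ⊆ cs.wordProd '' {ω : List B | ω.length = n} := by
    intro w hw
    obtain ⟨ω, hlen, heq⟩ := cs.exists_reduced_word w
    exact ⟨ω, by simp only [Set.mem_setOf_eq] at hw ⊢; rw [← hlen.eq, ← heq]; exact hw, heq.symm⟩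
  exact ((List.finite_length_eq B n).image _).subset h1

lemma finite_cond (p : W → Prop) (n : ℕ) (h : ∀ w, p w → ℓ w = n) :
    Finite {w : W // p w} := by
  have h2 : {w : W | p w}.Finite := (finite_level cs n).subset h
  exact h2.to_subtype

lemma nat_card_sigma {ι : Type*} [Fintype ι] (f : ι → Type*) [∀ i, Finite (f i)] :
    Nat.card (Σ i, f i) = ∑ i, Nat.card (f i) := by
  haveI : ∀ i, Fintype (f i) := fun i => Fintype.ofFinite _
  simp only [Nat.card_eq_fintype_card, Fintype.card_sigma]

lemma WP_mono {K J : Set B} (h : K ⊆ J) : WP cs K ≤ WP cs J :=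
  Subgroup.closure_mono (Set.image_mono h)

lemma length_mul_of_decomp {K : Set B} {u v : W} (hu : u ∈ WP cs K)
    (hv : ∀ i ∈ K, ¬ cs.IsLeftDescent v i) : ℓ (u * v) = ℓ u + ℓ v :=
  length_mul_of_min cs (min_of_not_descent cs hv) u hu

/-- The Poincaré series of a standard parabolic subgroup. -/
def PJ (K : Set B) : PowerSeries ℤ :=
  PowerSeries.mk fun n => (Nat.card {w : W // w ∈ WP cs K ∧ ℓ w = n} : ℤ)

/-- The series counting `K`-reduced elements of `W_J`. -/
def YJ (K J : Set B) : PowerSeries ℤ :=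
  PowerSeries.mk fun n =>
    (Nat.card {v : W // v ∈ WP cs J ∧ (∀ i ∈ K, ¬ cs.IsLeftDescent v i) ∧ ℓ v = n} : ℤ)

/-- The series counting elements of `W_J` all of whose `J`-simple reflections are descents. -/
def NJ (J : Set B) : PowerSeries ℤ :=
  PowerSeries.mk fun n =>
    (Nat.card {w : W // w ∈ WP cs J ∧ (∀ i ∈ J, cs.IsLeftDescent w i) ∧ ℓ w = n} : ℤ)

lemma PJ_coeff_zero (K : Set B) : PowerSeries.constantCoeff (PJ cs K) = 1 := by
  rw [PJ, ← PowerSeries.coeff_zero_eq_constantCoeff, PowerSeries.coeff_mk]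
  haveI : Unique {w : W // w ∈ WP cs K ∧ ℓ w = 0} := by
    refine ⟨⟨⟨1, one_mem _, cs.length_one⟩⟩, ?_⟩
    rintro ⟨w, hw, hlen⟩
    exact Subtype.ext (cs.length_eq_zero_iff.mp hlen)
  rw [Nat.card_unique]
  norm_num

lemma PJ_empty : PJ cs (∅ : Set B) = 1 := by
  ext n
  rw [PJ, PowerSeries.coeff_mk, PowerSeries.coeff_one]
  have hWP : WP cs (∅ : Set B) = ⊥ := by
    rw [WP, Set.image_empty, Subgroup.closure_empty]
  rcases eq_or_ne n 0 with rfl | hn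
  · haveI : Unique {w : W // w ∈ WP cs (∅ : Set B) ∧ ℓ w = 0} := by
      refine ⟨⟨⟨1, one_mem _, cs.length_one⟩⟩, ?_⟩
      rintro ⟨w, hw, hlen⟩
      exact Subtype.ext (cs.length_eq_zero_iff.mp hlen)
    rw [Nat.card_unique]
    norm_num
  · haveI : IsEmpty {w : W // w ∈ WP cs (∅ : Set B) ∧ ℓ w = n} := by
      refine ⟨?_⟩
      rintro ⟨w, hw, hlen⟩
      rw [hWP, Subgroup.mem_bot] at hw
      subst hw
      rw [cs.length_one] at hlen
      exact hn hlen.symm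
    rw [Nat.card_of_isEmpty]
    simp [hn]

lemma YJ_self (J : Set B) : YJ cs J J = 1 := by
  ext n
  rw [YJ, PowerSeries.coeff_mk, PowerSeries.coeff_one]
  rcases eq_or_ne n 0 with rfl | hn
  · haveI : Unique {v : W // v ∈ WP cs J ∧ (∀ i ∈ J, ¬ cs.IsLeftDescent v i) ∧ ℓ v = 0} := by
      refine ⟨⟨⟨1, one_mem _, fun i _ => cs.not_isLeftDescent_one i, cs.length_one⟩⟩, ?_⟩
      rintro ⟨v, hv, hnd, hlen⟩
      exact Subtype.ext (cs.length_eq_zero_iff.mp hlen)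
    rw [Nat.card_unique]
    norm_num
  · haveI : IsEmpty {v : W // v ∈ WP cs J ∧ (∀ i ∈ J, ¬ cs.IsLeftDescent v i) ∧ ℓ v = n} := by
      refine ⟨?_⟩
      rintro ⟨v, hv, hnd, hlen⟩
      rcases eq_or_ne v 1 with rfl | hvne
      · rw [cs.length_one] at hlen
        exact hn hlen.symm
      · obtain ⟨i, hiJ, hdesc, _⟩ := exists_leftDescent_WP cs hv hvne
        exact hnd i hiJ hdesc
    rw [Nat.card_of_isEmpty]
    simp [hn]

/-- The convolution identity `P_J = P_K * Y_{K,J}`. -/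
lemma PJ_eq_mul {K J : Set B} (hKJ : K ⊆ J) : PJ cs J = PJ cs K * YJ cs K J := by
  classical
  haveI hUfin : ∀ p : ℕ × ℕ, Finite {u : W // u ∈ WP cs K ∧ ℓ u = p.1} :=
    fun p => finite_cond cs _ p.1 (fun w hw => hw.2)
  haveI hVfin : ∀ p : ℕ × ℕ, Finite
      {v : W // v ∈ WP cs J ∧ (∀ i ∈ K, ¬ cs.IsLeftDescent v i) ∧ ℓ v = p.2} :=
    fun p => finite_cond cs _ p.2 (fun w hw => hw.2.2)
  ext n
  rw [PJ, PowerSeries.coeff_mk, PowerSeries.coeff_mul]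
  simp only [PJ, YJ, PowerSeries.coeff_mk]
  have hg : ∀ (x : Σ _p : (Finset.HasAntidiagonal.antidiagonal n : Finset (ℕ × ℕ)),
      ({u : W // u ∈ WP cs K ∧ ℓ u = (_p : ℕ × ℕ).1} ×
       {v : W // v ∈ WP cs J ∧ (∀ i ∈ K, ¬ cs.IsLeftDescent v i) ∧ ℓ v = (_p : ℕ × ℕ).2})),
      (x.2.1.1 * x.2.2.1) ∈ WP cs J ∧ ℓ (x.2.1.1 * x.2.2.1) = n := by
    rintro ⟨⟨⟨a, b⟩, hab⟩, ⟨u, hu⟩, ⟨v, hv⟩⟩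
    refine ⟨mul_mem (WP_mono cs hKJ hu.1) hv.1, ?_⟩
    have hadd : ℓ (u * v) = ℓ u + ℓ v := length_mul_of_decomp cs hu.1 hv.2.1
    rw [Finset.HasAntidiagonal.mem_antidiagonal] at hab
    simp only at hadd ⊢
    rw [hadd, hu.2, hv.2.2]
    exact hab
  have E : (Σ _p : (Finset.HasAntidiagonal.antidiagonal n : Finset (ℕ × ℕ)),
      ({u : W // u ∈ WP cs K ∧ ℓ u = (_p : ℕ × ℕ).1} ×
       {v : W // v ∈ WP cs J ∧ (∀ i ∈ K, ¬ cs.IsLeftDescent v i) ∧ ℓ v = (_p : ℕ × ℕ).2}))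
      ≃ {w : W // w ∈ WP cs J ∧ ℓ w = n} := by
    refine Equiv.ofBijective (fun x => ⟨x.2.1.1 * x.2.2.1, hg x⟩) ⟨?_, ?_⟩
    · rintro ⟨⟨⟨a, b⟩, hab⟩, ⟨u, hu⟩, ⟨v, hv⟩⟩ ⟨⟨⟨a', b'⟩, hab'⟩, ⟨u', hu'⟩, ⟨v', hv'⟩⟩ h
      simp only [Subtype.mk.injEq] at h
      obtain ⟨hueq, hveq⟩ := decomp_unique cs hu.1 hv.2.1 hu'.1 hv'.2.1 h
      have ha : a = a' := by
        have h1 : ℓ u = a := hu.2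
        have h2 : ℓ u' = a' := hu'.2
        rw [← h1, ← h2, hueq]
      have hb : b = b' := by
        have h1 : ℓ v = b := hv.2.2
        have h2 : ℓ v' = b' := hv'.2.2
        rw [← h1, ← h2, hveq]
      subst ha; subst hb; subst hueq; subst hveq
      rfl
    · rintro ⟨w, hwJ, hwn⟩
      obtain ⟨u, v, hu, hnd, hw, hadd⟩ := exists_decomp cs K w
      have hvJ : v ∈ WP cs J := by
        have hv' : v = u⁻¹ * w := by rw [hw]; group
        rw [hv']
        exact mul_mem (inv_mem (WP_mono cs hKJ hu)) hwJ
      refine ⟨⟨⟨(ℓ u, ℓ v), Finset.HasAntidiagonal.mem_antidiagonal.mpr (by omega)⟩,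
        ⟨u, hu, rfl⟩, ⟨v, hvJ, hnd, rfl⟩⟩, ?_⟩
      exact Subtype.ext hw.symm
  have key : Nat.card {w : W // w ∈ WP cs J ∧ ℓ w = n}
      = ∑ p ∈ Finset.HasAntidiagonal.antidiagonal n,
          Nat.card {u : W // u ∈ WP cs K ∧ ℓ u = p.1} *
          Nat.card {v : W // v ∈ WP cs J ∧ (∀ i ∈ K, ¬ cs.IsLeftDescent v i) ∧ ℓ v = p.2} := by
    rw [Nat.card_congr E.symm, nat_card_sigma,
      ← Finset.sum_coe_sort (Finset.HasAntidiagonal.antidiagonal n)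
        (fun p => Nat.card {u : W // u ∈ WP cs K ∧ ℓ u = p.1} *
          Nat.card {v : W // v ∈ WP cs J ∧ (∀ i ∈ K, ¬ cs.IsLeftDescent v i) ∧ ℓ v = p.2})]
    exact Finset.sum_congr rfl fun p _ => Nat.card_prod _ _
  rw [key]
  push_cast
  ring

end Counting

section IE

variable [Finite B]

/-- Inclusion–exclusion at the level of coefficients. -/
lemma sum_IE (J : Finset B) (n : ℕ) :
    ∑ K ∈ J.powerset, (-1 : ℤ) ^ K.card *
      (Nat.card {v : W // v ∈ WP cs ↑J ∧ (∀ i ∈ (↑K : Set B), ¬ cs.IsLeftDescent v i) ∧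
        ℓ v = n} : ℤ)
    = (Nat.card {w : W // w ∈ WP cs ↑J ∧ (∀ i ∈ (↑J : Set B), cs.IsLeftDescent w i) ∧
        ℓ w = n} : ℤ) := by
  classical
  haveI : Finite {w : W // w ∈ WP cs ↑J ∧ ℓ w = n} := finite_cond cs _ n (fun w hw => hw.2)
  haveI : Fintype {w : W // w ∈ WP cs ↑J ∧ ℓ w = n} := Fintype.ofFinite _
  have hcardK : ∀ K : Finset B,
      (Nat.card {v : W // v ∈ WP cs ↑J ∧ (∀ i ∈ (↑K : Set B), ¬ cs.IsLeftDescent v i) ∧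
        ℓ v = n} : ℤ)
      = ∑ x : {w : W // w ∈ WP cs ↑J ∧ ℓ w = n},
          if (∀ i ∈ K, ¬ cs.IsLeftDescent x.1 i) then (1 : ℤ) else 0 := by
    intro K
    rw [Finset.sum_boole]
    congr 1
    have E : {v : W // v ∈ WP cs ↑J ∧ (∀ i ∈ (↑K : Set B), ¬ cs.IsLeftDescent v i) ∧ ℓ v = n}
        ≃ {x : {w : W // w ∈ WP cs ↑J ∧ ℓ w = n} // ∀ i ∈ K, ¬ cs.IsLeftDescent x.1 i} :=
      ⟨fun v => ⟨⟨v.1, v.2.1, v.2.2.2⟩, fun i hi => v.2.2.1 i (by exact_mod_cast hi)⟩,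
       fun x => ⟨x.1.1, x.1.2.1, fun i hi => x.2 i (by exact_mod_cast hi), x.1.2.2⟩,
       fun v => rfl, fun x => rfl⟩
    rw [Nat.card_congr E, Nat.card_eq_fintype_card, Fintype.card_subtype]
  have hcardN :
      (Nat.card {w : W // w ∈ WP cs ↑J ∧ (∀ i ∈ (↑J : Set B), cs.IsLeftDescent w i) ∧
        ℓ w = n} : ℤ)
      = ∑ x : {w : W // w ∈ WP cs ↑J ∧ ℓ w = n},
          if (∀ i ∈ J, cs.IsLeftDescent x.1 i) then (1 : ℤ) else 0 := by
    rw [Finset.sum_boole]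
    congr 1
    have E : {w : W // w ∈ WP cs ↑J ∧ (∀ i ∈ (↑J : Set B), cs.IsLeftDescent w i) ∧ ℓ w = n}
        ≃ {x : {w : W // w ∈ WP cs ↑J ∧ ℓ w = n} // ∀ i ∈ J, cs.IsLeftDescent x.1 i} :=
      ⟨fun v => ⟨⟨v.1, v.2.1, v.2.2.2⟩, fun i hi => v.2.2.1 i (by exact_mod_cast hi)⟩,
       fun x => ⟨x.1.1, x.1.2.1, fun i hi => x.2 i (by exact_mod_cast hi), x.1.2.2⟩,
       fun v => rfl, fun x => rfl⟩
    rw [Nat.card_congr E, Nat.card_eq_fintype_card, Fintype.card_subtype]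
  simp only [hcardK]
  rw [hcardN]
  rw [show ∑ K ∈ J.powerset, (-1 : ℤ) ^ K.card *
        ∑ x : {w : W // w ∈ WP cs ↑J ∧ ℓ w = n},
          (if (∀ i ∈ K, ¬ cs.IsLeftDescent x.1 i) then (1 : ℤ) else 0)
      = ∑ x : {w : W // w ∈ WP cs ↑J ∧ ℓ w = n}, ∑ K ∈ J.powerset,
          (-1 : ℤ) ^ K.card * (if (∀ i ∈ K, ¬ cs.IsLeftDescent x.1 i) then (1 : ℤ) else 0)
    from by
      simp_rw [Finset.mul_sum]
      exact Finset.sum_comm]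
  refine Finset.sum_congr rfl fun x _ => ?_
  set E := J.filter (fun i => ¬ cs.IsLeftDescent x.1 i) with hE
  have hEJ : E ⊆ J := Finset.filter_subset _ _
  have step1 : ∀ K ∈ J.powerset,
      (-1 : ℤ) ^ K.card * (if (∀ i ∈ K, ¬ cs.IsLeftDescent x.1 i) then (1 : ℤ) else 0)
      = if K ⊆ E then (-1 : ℤ) ^ K.card else 0 := by
    intro K hK
    rw [Finset.mem_powerset] at hK
    by_cases h : ∀ i ∈ K, ¬ cs.IsLeftDescent x.1 i
    · have hsub : K ⊆ E := by
        intro i hi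
        rw [hE, Finset.mem_filter]
        exact ⟨hK hi, h i hi⟩
      rw [if_pos h, if_pos hsub, mul_one]
    · have hnsub : ¬ K ⊆ E := by
        intro hsub
        apply h
        intro i hi
        have h2 := hsub hi
        rw [hE, Finset.mem_filter] at h2
        exact h2.2
      rw [if_neg h, mul_zero, if_neg hnsub]
  rw [Finset.sum_congr rfl step1, ← Finset.sum_filter]
  have hfil : J.powerset.filter (· ⊆ E) = E.powerset := by
    ext K
    simp only [Finset.mem_filter, Finset.mem_powerset]
    exact ⟨fun h => h.2, fun h => ⟨h.trans hEJ, h⟩⟩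
  rw [hfil, Finset.sum_powerset_neg_one_pow_card]
  have hcond : (E = ∅) ↔ (∀ i ∈ J, cs.IsLeftDescent x.1 i) := by
    rw [hE, Finset.filter_eq_empty_iff]
    simp
  by_cases h : ∀ i ∈ J, cs.IsLeftDescent x.1 i
  · rw [if_pos (hcond.mpr h), if_pos h]
  · rw [if_neg (fun he => h (hcond.mp he)), if_neg h]

lemma NJ_poly (J : Finset B) : ∃ Np : Polynomial ℤ, (Np : PowerSeries ℤ) = NJ cs ↑J := by
  classical
  have hvan : ∃ d : ℕ, ∀ n, d < n → (PowerSeries.coeff n) (NJ cs ↑J) = 0 := by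
    by_cases hex : ∃ w₀ : W, w₀ ∈ WP cs ↑J ∧ ∀ i ∈ (↑J : Set B), cs.IsLeftDescent w₀ i
    · obtain ⟨w₀, hw₀, hd₀⟩ := hex
      refine ⟨ℓ w₀, fun n hn => ?_⟩
      rw [NJ, PowerSeries.coeff_mk]
      haveI : IsEmpty {w : W // w ∈ WP cs ↑J ∧
          (∀ i ∈ (↑J : Set B), cs.IsLeftDescent w i) ∧ ℓ w = n} := by
        refine ⟨?_⟩
        rintro ⟨w, hw, hdw, hlw⟩
        have := length_le_of_all_descents cs hw₀ hd₀ w hw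
        omega
      rw [Nat.card_of_isEmpty]
      simp
    · refine ⟨0, fun n hn => ?_⟩
      rw [NJ, PowerSeries.coeff_mk]
      haveI : IsEmpty {w : W // w ∈ WP cs ↑J ∧
          (∀ i ∈ (↑J : Set B), cs.IsLeftDescent w i) ∧ ℓ w = n} := by
        refine ⟨?_⟩
        rintro ⟨w, hw, hdw, _⟩
        exact hex ⟨w, hw, hdw⟩
      rw [Nat.card_of_isEmpty]
      simp
  obtain ⟨d, hd⟩ := hvan
  refine ⟨PowerSeries.trunc (d+1) (NJ cs ↑J), ?_⟩
  ext n
  rw [Polynomial.coeff_coe, PowerSeries.coeff_trunc]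
  by_cases h : n < d + 1
  · rw [if_pos h]
  · rw [if_neg h]
    exact (hd n (by omega)).symm

lemma NJ_coeff_zero (J : Finset B) (hJ : J.Nonempty) :
    PowerSeries.coeff 0 (NJ cs ↑J) = 0 := by
  obtain ⟨i₀, hi₀⟩ := hJ
  rw [NJ, PowerSeries.coeff_mk]
  haveI : IsEmpty {w : W // w ∈ WP cs ↑J ∧
      (∀ i ∈ (↑J : Set B), cs.IsLeftDescent w i) ∧ ℓ w = 0} := by
    refine ⟨?_⟩
    rintro ⟨w, hw, hdw, hlw⟩
    have hw1 : w = 1 := cs.length_eq_zero_iff.mp hlw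
    subst hw1
    exact cs.not_isLeftDescent_one i₀ (hdw i₀ (by exact_mod_cast hi₀))
  rw [Nat.card_of_isEmpty]
  simp

/-- The main induction: the Poincaré series of every standard parabolic is rational. -/
theorem rational_PJ (J : Finset B) : ∃ p q : Polynomial ℤ, q.coeff 0 ≠ 0 ∧
    (q : PowerSeries ℤ) * PJ cs ↑J = (p : PowerSeries ℤ) := by
  classical
  induction J using Finset.strongInduction with
  | _ J ih =>
  rcases Finset.eq_empty_or_nonempty J with rfl | hJne
  · refine ⟨1, 1, by simp, ?_⟩
    rw [Finset.coe_empty, PJ_empty]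
    simp
  · have hsel : ∀ K : Finset B, ∃ pqK : Polynomial ℤ × Polynomial ℤ,
        K ⊂ J → (pqK.2.coeff 0 ≠ 0 ∧ (pqK.2 : PowerSeries ℤ) * PJ cs ↑K = pqK.1) := by
      intro K
      by_cases h : K ⊂ J
      · obtain ⟨p, q, h1, h2⟩ := ih K h
        exact ⟨(p, q), fun _ => ⟨h1, h2⟩⟩
      · exact ⟨(1, 1), fun hh => absurd hh h⟩
    choose pq hpq using hsel
    set PS := J.powerset.erase J with hPS
    have hPSss : ∀ K ∈ PS, K ⊂ J := by
      intro K hK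
      rw [hPS, Finset.mem_erase, Finset.mem_powerset] at hK
      exact lt_of_le_of_ne hK.2 hK.1
    have hq0 : ∀ K ∈ PS, (pq K).2.coeff 0 ≠ 0 := fun K hK => (hpq K (hPSss K hK)).1
    have hqP : ∀ K ∈ PS, ((pq K).2 : PowerSeries ℤ) * PJ cs ↑K = (pq K).1 :=
      fun K hK => (hpq K (hPSss K hK)).2
    have hp0 : ∀ K ∈ PS, ((pq K).1).coeff 0 = ((pq K).2).coeff 0 := by
      intro K hK
      have h := congrArg (PowerSeries.constantCoeff) (hqP K hK)
      rw [map_mul, PJ_coeff_zero, mul_one, Polynomial.constantCoeff_coe,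
        Polynomial.constantCoeff_coe] at h
      exact h.symm
    have key : ∀ K ∈ PS, ((pq K).1 : PowerSeries ℤ) * YJ cs ↑K ↑J
        = ((pq K).2 : PowerSeries ℤ) * PJ cs ↑J := by
      intro K hK
      have hKJ : (↑K : Set B) ⊆ ↑J := Finset.coe_subset.mpr (hPSss K hK).subset
      rw [← hqP K hK, mul_assoc, ← PJ_eq_mul cs hKJ]
    have hIE : ∑ K ∈ J.powerset, (PowerSeries.C ((-1 : ℤ)^K.card)) * YJ cs ↑K ↑J
        = NJ cs ↑J := by
      ext n
      rw [map_sum]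
      simp only [PowerSeries.coeff_C_mul]
      rw [NJ, PowerSeries.coeff_mk]
      simpa only [YJ, PowerSeries.coeff_mk] using sum_IE cs J n
    have hsplit : ∑ K ∈ PS, (PowerSeries.C ((-1 : ℤ)^K.card)) * YJ cs ↑K ↑J
        = NJ cs ↑J - PowerSeries.C ((-1 : ℤ)^J.card) := by
      have hJmem : J ∈ J.powerset := Finset.mem_powerset_self J
      rw [← Finset.sum_erase_add _ _ hJmem, YJ_self, mul_one] at hIE
      exact eq_sub_of_add_eq hIE
    obtain ⟨Np, hNp⟩ := NJ_poly cs J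
    have main : ((∑ K ∈ PS, Polynomial.C ((-1 : ℤ)^K.card) *
          ((pq K).2 * ∏ K' ∈ PS.erase K, (pq K').1) : Polynomial ℤ) : PowerSeries ℤ)
          * PJ cs ↑J
        = (((Np - Polynomial.C ((-1 : ℤ)^J.card)) * ∏ K ∈ PS, (pq K).1 :
            Polynomial ℤ) : PowerSeries ℤ) := by
      rw [show ((∑ K ∈ PS, Polynomial.C ((-1 : ℤ)^K.card) *
          ((pq K).2 * ∏ K' ∈ PS.erase K, (pq K').1) : Polynomial ℤ) : PowerSeries ℤ)
          = ∑ K ∈ PS, (PowerSeries.C ((-1 : ℤ)^K.card)) *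
            (((pq K).2 : PowerSeries ℤ) * ∏ K' ∈ PS.erase K, ((pq K').1 : PowerSeries ℤ))
        from by
          rw [show ((∑ K ∈ PS, Polynomial.C ((-1 : ℤ)^K.card) *
              ((pq K).2 * ∏ K' ∈ PS.erase K, (pq K').1) : Polynomial ℤ) : PowerSeries ℤ)
            = Polynomial.coeToPowerSeries.ringHom (∑ K ∈ PS, Polynomial.C ((-1 : ℤ)^K.card) *
              ((pq K).2 * ∏ K' ∈ PS.erase K, (pq K').1)) from rfl]
          rw [map_sum]
          refine Finset.sum_congr rfl fun K hK => ?_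
          rw [map_mul, map_mul, map_prod]
          simp only [Polynomial.coeToPowerSeries.ringHom_apply, Polynomial.coe_C]]
      rw [show (((Np - Polynomial.C ((-1 : ℤ)^J.card)) * ∏ K ∈ PS, (pq K).1 :
            Polynomial ℤ) : PowerSeries ℤ)
          = ((Np : PowerSeries ℤ) - PowerSeries.C ((-1 : ℤ)^J.card)) *
            ∏ K ∈ PS, ((pq K).1 : PowerSeries ℤ)
        from by
          rw [show (((Np - Polynomial.C ((-1 : ℤ)^J.card)) * ∏ K ∈ PS, (pq K).1 :
              Polynomial ℤ) : PowerSeries ℤ)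
            = Polynomial.coeToPowerSeries.ringHom ((Np - Polynomial.C ((-1 : ℤ)^J.card)) *
              ∏ K ∈ PS, (pq K).1) from rfl]
          rw [map_mul, map_sub, map_prod]
          simp only [Polynomial.coeToPowerSeries.ringHom_apply, Polynomial.coe_C]]
      rw [hNp, ← hsplit]
      rw [Finset.sum_mul, Finset.sum_mul]
      refine Finset.sum_congr rfl fun K hK => ?_
      rw [← Finset.prod_erase_mul PS _ hK]
      have hkey := key K hK
      calc PowerSeries.C ((-1 : ℤ)^K.card) *
            (((pq K).2 : PowerSeries ℤ) * ∏ K' ∈ PS.erase K, ((pq K').1 : PowerSeries ℤ))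
            * PJ cs ↑J
          = PowerSeries.C ((-1 : ℤ)^K.card) *
            ((((pq K).2 : PowerSeries ℤ) * PJ cs ↑J) *
              ∏ K' ∈ PS.erase K, ((pq K').1 : PowerSeries ℤ)) := by ring
        _ = PowerSeries.C ((-1 : ℤ)^K.card) *
            ((((pq K).1 : PowerSeries ℤ) * YJ cs ↑K ↑J) *
              ∏ K' ∈ PS.erase K, ((pq K').1 : PowerSeries ℤ)) := by rw [hkey]
        _ = PowerSeries.C ((-1 : ℤ)^K.card) * YJ cs ↑K ↑J *
            ((∏ K' ∈ PS.erase K, ((pq K').1 : PowerSeries ℤ)) * ((pq K).1 : PowerSeries ℤ)) := by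
            ring
    refine ⟨(Np - Polynomial.C ((-1 : ℤ)^J.card)) * ∏ K ∈ PS, (pq K).1,
      ∑ K ∈ PS, Polynomial.C ((-1 : ℤ)^K.card) * ((pq K).2 * ∏ K' ∈ PS.erase K, (pq K').1),
      ?_, main⟩
    -- the constant coefficient is nonzero
    have hc := congrArg (PowerSeries.constantCoeff) main
    rw [map_mul, PJ_coeff_zero, mul_one, Polynomial.constantCoeff_coe,
      Polynomial.constantCoeff_coe] at hc
    rw [hc]
    have hNp0 : Np.coeff 0 = 0 := by
      have := NJ_coeff_zero cs J hJne
      rw [← hNp, Polynomial.coeff_coe] at this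
      exact this
    rw [Polynomial.mul_coeff_zero, Polynomial.coeff_sub, hNp0, Polynomial.coeff_C]
    simp only [if_pos rfl, zero_sub]
    apply mul_ne_zero
    · simp
    · rw [show (∏ K ∈ PS, (pq K).1).coeff 0 = ∏ K ∈ PS, ((pq K).1).coeff 0 from by
        rw [← Polynomial.constantCoeff_apply, map_prod]
        rfl]
      rw [Finset.prod_ne_zero_iff]
      intro K hK
      rw [hp0 K hK]
      exact hq0 K hK

end IE

end

end CoxStatement18

/-- The Poincaré series `W(x) = Σ_{n≥0} |{w ∈ W : ℓ(w) = n}| xⁿ` of a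
Coxeter system with finitely many generators is a rational formal power series: there are
polynomials `p, q ∈ ℤ[x]` with `q(0) ≠ 0` and `q·W = p` in `ℤ[[x]]`. -/
theorem statement18 {B W : Type*} [Group W] [Finite B] {M : CoxeterMatrix B}
    (cs : CoxeterSystem M W) :
    ∃ p q : Polynomial ℤ, q.coeff 0 ≠ 0 ∧
      (q : PowerSeries ℤ) *
          PowerSeries.mk (fun n => (Nat.card {w : W // cs.length w = n} : ℤ)) =
        (p : PowerSeries ℤ) := by
  classical
  haveI : Fintype B := Fintype.ofFinite B
  obtain ⟨p, q, hq0, hqP⟩ := CoxStatement18.rational_PJ cs Finset.univ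
  refine ⟨p, q, hq0, ?_⟩
  have hmk : PowerSeries.mk (fun n => (Nat.card {w : W // cs.length w = n} : ℤ))
      = CoxStatement18.PJ cs ↑(Finset.univ : Finset B) := by
    ext n
    rw [PowerSeries.coeff_mk, CoxStatement18.PJ, PowerSeries.coeff_mk]
    congr 1
    apply Nat.card_congr
    apply Equiv.subtypeEquivRight
    intro w
    have htop : CoxStatement18.WP cs ↑(Finset.univ : Finset B) = ⊤ := by
      rw [CoxStatement18.WP]
      have himg : (cs.simple '' ↑(Finset.univ : Finset B)) = Set.range cs.simple := by
        rw [Finset.coe_univ, Set.image_univ]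
      rw [himg, cs.subgroup_closure_range_simple]
    have hmem : w ∈ CoxStatement18.WP cs ↑(Finset.univ : Finset B) := by
      rw [htop]; trivial
    exact ⟨fun h => ⟨hmem, h⟩, fun h => h.2⟩
  rw [hmk]
  exact hqP
end
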